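/- arXiv:1106.0348 — 14 statements merged into one kernel-verified Lean document; each statement's English description precedes it below -/
import Mathlib

section
/- Let A be a po-semiring. Then every maximal element of A is a prime element of A. -/
/-- A po-semiring: a commutative semiring equipped with a compatible partial order
such that 0 is the least and 1 is the greatest element. -/
class PoSemiring (A : Type*) extends CommSemiring A, PartialOrder A where
  add_right_mono : ∀ x y z : A, x ≤ y → x + z ≤ y + z
  mul_left_mono : ∀ x y z : A, (0 : A) ≤ x → y ≤ z → x * y ≤ x * z
  zero_le_elem : ∀ x : A, (0 : A) ≤ x
  le_one_elem : ∀ x : A, x ≤ (1 : A)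

/-- A maximal element of a po-semiring. -/
def IsMaximalElem {A : Type*} [PoSemiring A] (m : A) : Prop :=
  m ≠ 1 ∧ ∀ x : A, m ≤ x → x < 1 → m = x

/-- A prime element of a po-semiring. -/
def IsPrimeElem {A : Type*} [PoSemiring A] (p : A) : Prop :=
  p ≠ 1 ∧ ∀ x y : A, x * y ≤ p → x ≤ p ∨ y ≤ p

/-- The set `Z(A)` of nonzero zero divisors of a po-semiring. -/
def zdSet (A : Type*) [PoSemiring A] : Set A :=
  {a | a ≠ 0 ∧ ∃ b : A, b ≠ 0 ∧ a * b = 0}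

/-- Condition (C1): each non-nilpotent element lies above a nonzero idempotent
having an orthogonal idempotent complement. -/
def CondC1 (A : Type*) [PoSemiring A] : Prop :=
  ∀ u : A, ¬ IsNilpotent u →
    ∃ w v : A, w ≠ 0 ∧ w * w = w ∧ v * v = v ∧ w ≤ u ∧ w + v = 1 ∧ w * v = 0

/-- Condition (C2): each nonzero idempotent lies above a nonzero idempotent
having an orthogonal idempotent complement. -/
def CondC2 (A : Type*) [PoSemiring A] : Prop :=
  ∀ u : A, u ≠ 0 → u * u = u →
    ∃ w v : A, w ≠ 0 ∧ w * w = w ∧ v * v = v ∧ w ≤ u ∧ w + v = 1 ∧ w * v = 0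

/-- `A` contains no infinite set of orthogonal idempotents. -/
def NoInfiniteOrthogonalIdempotents (A : Type*) [PoSemiring A] : Prop :=
  ∀ S : Set A, (∀ e ∈ S, e ≠ 0 ∧ e * e = e) →
    (∀ e ∈ S, ∀ f ∈ S, e ≠ f → e * f = 0) → S.Finite

/-- DCC for elements: no infinite strictly descending chain. -/
def ElemDCC (A : Type*) [PoSemiring A] : Prop :=
  ¬ ∃ f : ℕ → A, ∀ n : ℕ, f (n + 1) < f n

/-- ACC for elements: no infinite strictly ascending chain. -/
def ElemACC (A : Type*) [PoSemiring A] : Prop :=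
  ¬ ∃ f : ℕ → A, ∀ n : ℕ, f n < f (n + 1)

theorem maximal_elem_is_prime {A : Type*} [PoSemiring A] [Nontrivial A]
    (m : A) (hm : IsMaximalElem m) : IsPrimeElem m := by
  obtain ⟨hm1, hmax⟩ := hm
  have le_add : ∀ a b : A, a ≤ a + b := by
    intro a b
    have := PoSemiring.add_right_mono (0 : A) b a (PoSemiring.zero_le_elem b)
    simpa [add_comm] using this
  have h11 : (1 : A) + 1 = 1 :=
    le_antisymm (PoSemiring.le_one_elem _) (le_add 1 1)
  have hidem : ∀ a : A, a + a = a := by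
    intro a
    calc a + a = a * (1 + 1) := by ring
    _ = a := by rw [h11, mul_one]
  refine ⟨hm1, fun x y hxy => ?_⟩
  by_cases hx : x ≤ m
  · exact Or.inl hx
  · right
    have hmx : m + x = 1 := by
      by_contra hne
      have hlt : m + x < 1 := lt_of_le_of_ne (PoSemiring.le_one_elem _) hne
      have heq := hmax (m + x) (le_add m x) hlt
      have : x ≤ m + x := by simpa [add_comm] using le_add x m
      exact hx (heq ▸ this)
    have hym : y * m ≤ m := by
      have := PoSemiring.mul_left_mono m y 1 (PoSemiring.zero_le_elem m) (PoSemiring.le_one_elem y)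
      simpa [mul_comm] using this
    calc y = y * (m + x) := by rw [hmx, mul_one]
    _ = y * m + x * y := by ring
    _ ≤ m + x * y := PoSemiring.add_right_mono _ _ _ hym
    _ ≤ m + m := by
        have := PoSemiring.add_right_mono (x * y) m m hxy
        simpa [add_comm] using this
    _ = m := hidem m
end

section
/- Let A be a po-semiring, let m be a maximal element of A, and let b ∈ A. If m·b = 0, then either m² = m or b² = 0. -/
theorem maximal_mul_eq_zero {A : Type*} [PoSemiring A] [Nontrivial A]
    (m b : A) (hm : IsMaximalElem m) (h : m * b = 0) :
    m * m = m ∨ b * b = 0 := by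
  have hmb : m ≤ m + b := by
    have := PoSemiring.add_right_mono (0:A) b m (PoSemiring.zero_le_elem b)
    simpa [add_comm] using this
  have hle1 : m + b ≤ 1 := PoSemiring.le_one_elem _
  rcases eq_or_lt_of_le hle1 with heq | hlt
  · left
    have : m * (m + b) = m * 1 := by rw [heq]
    rw [mul_add, h, add_zero, mul_one] at this
    exact this
  · right
    have hme : m = m + b := hm.2 _ hmb hlt
    have hbm : b ≤ m := by
      have : b ≤ m + b := by
        have := PoSemiring.add_right_mono (0:A) m b (PoSemiring.zero_le_elem m)
        simpa [add_comm] using this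
      rw [← hme] at this
      exact this
    have h1 : b * b ≤ b * m := PoSemiring.mul_left_mono b b m (PoSemiring.zero_le_elem b) hbm
    rw [mul_comm b m, h] at h1
    exact le_antisymm h1 (PoSemiring.zero_le_elem _)
end

section
/- Let A be a po-semiring satisfying condition (C1) and containing no infinite set of orthogonal idempotents. Then every element of A other than 0 and 1 is a zero divisor, i.e., Z(A) = A \ {0, 1}. -/
section Aux
variable {A : Type*} [PoSemiring A]

lemma ps_zero_le (x : A) : (0 : A) ≤ x := PoSemiring.zero_le_elem x
lemma ps_le_one (x : A) : x ≤ (1 : A) := PoSemiring.le_one_elem x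

lemma ps_mul_le_right (x y : A) : x * y ≤ y := by
  have h := PoSemiring.mul_left_mono y x 1 (ps_zero_le y) (ps_le_one x)
  calc x * y = y * x := mul_comm x y
    _ ≤ y * 1 := h
    _ = y := mul_one y

lemma ps_eq_zero_of_le_zero {x : A} (h : x ≤ 0) : x = 0 :=
  le_antisymm h (ps_zero_le x)

lemma ps_idem_mul {w c : A} (hw : w * w = w) (h : w ≤ c) : w * c = w := by
  refine le_antisymm ?_ ?_
  · calc w * c = c * w := mul_comm w c
      _ ≤ w := ps_mul_le_right c w
  · calc w = w * w := hw.symm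
      _ ≤ w * c := PoSemiring.mul_left_mono w w c (ps_zero_le w) h

end Aux

theorem zdSet_eq_of_condC1 {A : Type*} [PoSemiring A] [Nontrivial A]
    (hC1 : CondC1 A) (horth : NoInfiniteOrthogonalIdempotents A) :
    zdSet A = {a : A | a ≠ 0 ∧ a ≠ 1} := by
  ext a
  simp only [zdSet, Set.mem_setOf_eq]
  constructor
  · rintro ⟨ha0, b, hb0, hab⟩
    refine ⟨ha0, ?_⟩
    rintro rfl
    exact hb0 (by simpa using hab)
  · rintro ⟨ha0, ha1⟩
    refine ⟨ha0, ?_⟩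
    by_contra hno
    push_neg at hno
    have h0 : ∀ b : A, a * b = 0 → b = 0 := by
      intro b hb
      by_contra hb0
      exact hno b hb0 hb
    -- powers
    have hpow : ∀ (n : ℕ) (c : A), a ^ n * c = 0 → c = 0 := by
      intro n
      induction n with
      | zero => intro c hc; simpa using hc
      | succ n ih =>
        intro c hc
        have h1 : a ^ n * (a * c) = 0 := by
          rw [← mul_assoc, ← pow_succ]; exact hc
        exact h0 c (ih _ h1)
    have hidempow : ∀ (c : A), c * c = c → ∀ n : ℕ, c ^ (n + 1) = c := by
      intro c hc n
      induction n with
      | zero => simp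
      | succ n ih => rw [pow_succ, ih, hc]
    have hnn : ∀ c : A, c ≠ 0 → c * c = c → ¬ IsNilpotent (a * c) := by
      rintro c h1 h2 ⟨n, hn⟩
      cases n with
      | zero => exact one_ne_zero (α := A) (by simpa using hn)
      | succ n =>
        rw [mul_pow, hidempow c h2 n] at hn
        exact h1 (hpow (n + 1) c hn)
    have hstep : ∀ c : A, c ≠ 0 → c * c = c →
        ∃ w v : A, w ≠ 0 ∧ w * w = w ∧ v * v = v ∧ w ≤ a * c ∧ w + v = 1 ∧ w * v = 0 :=
      fun c h1 h2 => hC1 (a * c) (hnn c h1 h2)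
    choose! W V hW0 hWidem hVidem hWle hWV1 hWV0 using hstep
    -- the recursively defined sequence
    obtain ⟨f, hf0, hfs⟩ : ∃ f : ℕ → A, f 0 = 1 ∧ ∀ n, f (n + 1) = f n * V (f n) :=
      ⟨fun n => Nat.rec 1 (fun _ ih => ih * V ih) n, rfl, fun n => rfl⟩
    set s : ℕ → A := fun n => ∑ j ∈ Finset.range n, W (f j) with hs
    -- main invariants
    have main : ∀ n : ℕ, f n ≠ 0 ∧ f n * f n = f n ∧ s n + f n = 1 ∧
        ∀ j < n, f n * W (f j) = 0 := by
      intro n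
      induction n using Nat.strong_induction_on with
      | _ n ih =>
        match n with
        | 0 =>
          refine ⟨by rw [hf0]; exact one_ne_zero, by rw [hf0, one_mul], ?_, ?_⟩
          · simp [hs, hf0]
          · intro j hj; exact absurd hj (Nat.not_lt_zero j)
        | n + 1 =>
          obtain ⟨hn0, hnidem, hnsum, hnorth⟩ := ih n (Nat.lt_succ_self n)
          have hw0 := hW0 (f n) hn0 hnidem
          have hwi := hWidem (f n) hn0 hnidem
          have hvi := hVidem (f n) hn0 hnidem
          have hwle := hWle (f n) hn0 hnidem
          have hwv1 := hWV1 (f n) hn0 hnidem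
          have hwv0 := hWV0 (f n) hn0 hnidem
          have hwlef : W (f n) ≤ f n := le_trans hwle (ps_mul_le_right a (f n))
          have hwf : W (f n) * f n = W (f n) := ps_idem_mul hwi hwlef
          -- a * W (f j) = W (f j) for j ≤ n
          have haw : ∀ j, j ≤ n → a * W (f j) = W (f j) := by
            intro j hj
            obtain ⟨hj0, hjidem, _, _⟩ := ih j (Nat.lt_succ_of_le hj)
            have hwj := hWidem (f j) hj0 hjidem
            have hwjle := hWle (f j) hj0 hjidem
            have hwjf : W (f j) * f j = W (f j) :=
              ps_idem_mul hwj (le_trans hwjle (ps_mul_le_right a (f j)))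
            refine le_antisymm (ps_mul_le_right a (W (f j))) ?_
            calc W (f j) = W (f j) * W (f j) := hwj.symm
              _ ≤ W (f j) * (a * f j) :=
                  PoSemiring.mul_left_mono _ _ _ (ps_zero_le _) hwjle
              _ = a * (W (f j) * f j) := by ring
              _ = a * W (f j) := by rw [hwjf]
          -- the sum identity at n+1
          have hsum : s (n + 1) + f (n + 1) = 1 := by
            have : s (n + 1) = s n + W (f n) := by
              simp [hs, Finset.sum_range_succ]
            rw [this, hfs n]
            calc s n + W (f n) + f n * V (f n)
                = s n + (f n * W (f n) + f n * V (f n)) := by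
                  rw [mul_comm (f n) (W (f n)), hwf]; ring
              _ = s n + f n * (W (f n) + V (f n)) := by rw [mul_add]
              _ = s n + f n := by rw [hwv1, mul_one]
              _ = 1 := hnsum
          have hidem : f (n + 1) * f (n + 1) = f (n + 1) := by
            rw [hfs n]
            calc f n * V (f n) * (f n * V (f n))
                = (f n * f n) * (V (f n) * V (f n)) := by ring
              _ = f n * V (f n) := by rw [hnidem, hvi]
          have horthn : ∀ j < n + 1, f (n + 1) * W (f j) = 0 := by
            intro j hj
            rcases Nat.lt_succ_iff_lt_or_eq.mp hj with hj' | hj'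
            · rw [hfs n]
              calc f n * V (f n) * W (f j) = f n * W (f j) * V (f n) := by ring
                _ = 0 * V (f n) := by rw [hnorth j hj']
                _ = 0 := zero_mul _
            · rw [hj', hfs n]
              calc f n * V (f n) * W (f n) = f n * (W (f n) * V (f n)) := by ring
                _ = f n * 0 := by rw [hwv0]
                _ = 0 := mul_zero _
          refine ⟨?_, hidem, hsum, horthn⟩
          -- f (n+1) ≠ 0
          intro hz
          have hs1 : s (n + 1) = 1 := by rw [hz, add_zero] at hsum; exact hsum
          have : a = 1 := by
            calc a = a * s (n + 1) := by rw [hs1, mul_one]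
              _ = ∑ j ∈ Finset.range (n + 1), a * W (f j) := by
                  rw [hs, Finset.mul_sum]
              _ = ∑ j ∈ Finset.range (n + 1), W (f j) := by
                  refine Finset.sum_congr rfl ?_
                  intro j hj
                  exact haw j (Nat.lt_succ_iff.mp (Finset.mem_range.mp hj))
              _ = s (n + 1) := rfl
              _ = 1 := hs1
          exact ha1 this
    -- build an infinite orthogonal set
    have hWf0 : ∀ n, W (f n) ≠ 0 := fun n => hW0 (f n) (main n).1 (main n).2.1
    have hWfi : ∀ n, W (f n) * W (f n) = W (f n) :=
      fun n => hWidem (f n) (main n).1 (main n).2.1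
    have horthWW : ∀ j k : ℕ, j < k → W (f k) * W (f j) = 0 := by
      intro j k hjk
      have hle : W (f k) ≤ f k := le_trans (hWle (f k) (main k).1 (main k).2.1)
        (ps_mul_le_right a (f k))
      apply ps_eq_zero_of_le_zero
      calc W (f k) * W (f j) = W (f j) * W (f k) := mul_comm _ _
        _ ≤ W (f j) * f k := PoSemiring.mul_left_mono _ _ _ (ps_zero_le _) hle
        _ = f k * W (f j) := mul_comm _ _
        _ ≤ 0 := le_of_eq ((main k).2.2.2 j hjk)
    have hinj : Function.Injective (fun n => W (f n)) := by
      intro j k hjk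
      have hjk' : W (f j) = W (f k) := hjk
      by_contra hne
      rcases Nat.lt_or_ge j k with h | h
      · have := horthWW j k h
        rw [← hjk'] at this
        exact hWf0 j (by rw [← hWfi j]; exact this)
      · have hk : k < j := lt_of_le_of_ne h (Ne.symm hne)
        have := horthWW k j hk
        rw [hjk'] at this
        exact hWf0 k (by rw [← hWfi k]; exact this)
    have hfin : (Set.range fun n => W (f n)).Finite := by
      apply horth
      · rintro e ⟨n, rfl⟩
        exact ⟨hWf0 n, hWfi n⟩
      · rintro e ⟨m, rfl⟩ e' ⟨n, rfl⟩ hne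
        rcases Nat.lt_or_ge m n with h | h
        · rw [mul_comm]; exact horthWW m n h
        · have hmn : n < m := lt_of_le_of_ne h (fun h' => hne (by rw [h']))
          exact horthWW n m hmn
    exact (Set.infinite_range_of_injective hinj) hfin
end

section
/- Let A be a po-semiring satisfying condition (C2) in which DCC holds for elements of A (there is no infinite strictly descending chain of elements). Then every prime element of A is a maximal element of A. -/
section Helpers

variable {A : Type*} [PoSemiring A]

lemma PoSemiring.one_add_one : (1 : A) + 1 = 1 := by
  refine le_antisymm (PoSemiring.le_one_elem _) ?_
  have := PoSemiring.add_right_mono (0 : A) 1 1 (PoSemiring.zero_le_elem 1)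
  simpa using this

lemma PoSemiring.add_idem (a : A) : a + a = a := by
  have : a * (1 + 1) = a * 1 + a * 1 := mul_add a 1 1
  rw [PoSemiring.one_add_one, mul_one] at this
  exact this.symm

lemma PoSemiring.add_le_add' {a b c d : A} (h1 : a ≤ b) (h2 : c ≤ d) :
    a + c ≤ b + d := by
  calc a + c ≤ b + c := PoSemiring.add_right_mono a b c h1
    _ = c + b := add_comm _ _
    _ ≤ d + b := PoSemiring.add_right_mono c d b h2
    _ = b + d := add_comm _ _

lemma PoSemiring.mul_le_right (a b : A) : a * b ≤ b := by
  have := PoSemiring.mul_left_mono b a 1 (PoSemiring.zero_le_elem b)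
    (PoSemiring.le_one_elem a)
  rw [mul_one] at this
  calc a * b = b * a := mul_comm _ _
    _ ≤ b := this

lemma PoSemiring.mul_le_left (a b : A) : a * b ≤ a := by
  rw [mul_comm]; exact PoSemiring.mul_le_right b a

end Helpers

theorem prime_is_maximal_of_condC2_dcc {A : Type*} [PoSemiring A] [Nontrivial A]
    (hC2 : CondC2 A) (hdcc : ElemDCC A)
    (p : A) (hp : IsPrimeElem p) : IsMaximalElem p := by
  classical
  refine ⟨hp.1, fun x hpx hx1 => ?_⟩
  have hxne1 : x ≠ 1 := ne_of_lt hx1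
  -- powers of x decrease; by DCC they stabilize
  have hpowdec : ∀ m : ℕ, x ^ (m + 1) ≤ x ^ m := by
    intro m
    have : x ^ (m + 1) = x ^ m * x := pow_succ x m
    rw [this]
    exact PoSemiring.mul_le_left _ _
  obtain ⟨n, hn⟩ : ∃ n : ℕ, x ^ (n + 2) = x ^ (n + 1) := by
    by_contra h
    push_neg at h
    exact hdcc ⟨fun m => x ^ (m + 1), fun m =>
      lt_of_le_of_ne (hpowdec (m + 1)) (h m)⟩
  -- e = x^(n+1) is idempotent
  set e := x ^ (n + 1) with he
  have hstab : ∀ k : ℕ, x ^ (n + 1 + k) = x ^ (n + 1) := by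
    intro k
    induction k with
    | zero => rfl
    | succ k ih =>
      have : x ^ (n + 1 + (k + 1)) = x ^ (n + 1 + k) * x := pow_succ x _
      rw [this, ih, ← pow_succ x (n + 1)]
      exact hn
  have hee : e * e = e := by
    rw [he, ← pow_add]
    exact hstab (n + 1)
  have hex : e ≤ x := by
    rw [he, pow_succ]
    exact PoSemiring.mul_le_right _ _
  -- main claim: e ≤ p
  have hep : e ≤ p := by
    by_contra hep
    -- build a strictly descending chain of idempotents not below p
    have step : ∀ a : A, a * a = a → ¬ a ≤ p → a ≤ x →
        ∃ b : A, b * b = b ∧ ¬ b ≤ p ∧ b ≤ x ∧ b < a := by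
      intro a haa hap hax
      have ha0 : a ≠ 0 := by
        rintro rfl
        exact hap (PoSemiring.zero_le_elem p)
      obtain ⟨w, v, hw0, hww, hvv, hwa, hwv1, hwv0⟩ := hC2 a ha0 haa
      have hwvp : w ≤ p ∨ v ≤ p := hp.2 w v (hwv0 ▸ PoSemiring.zero_le_elem p)
      have hwp : w ≤ p := by
        rcases hwvp with h | h
        · exact h
        · exfalso
          have h1x : (1 : A) ≤ x := by
            calc (1 : A) = w + v := hwv1.symm
              _ ≤ a + p := PoSemiring.add_le_add' hwa h
              _ ≤ x + x := PoSemiring.add_le_add' hax hpx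
              _ = x := PoSemiring.add_idem x
          exact hxne1 (le_antisymm (PoSemiring.le_one_elem x) h1x)
      refine ⟨a * v, ?_, ?_, ?_, ?_⟩
      · calc a * v * (a * v) = (a * a) * (v * v) := by ring
          _ = a * v := by rw [haa, hvv]
      · intro hb
        apply hap
        calc a = a * (w + v) := by rw [hwv1, mul_one]
          _ = a * w + a * v := mul_add a w v
          _ ≤ w + p := PoSemiring.add_le_add' (PoSemiring.mul_le_right a w) hb
          _ ≤ p + p := PoSemiring.add_le_add' hwp (le_refl p)
          _ = p := PoSemiring.add_idem p
      · exact le_trans (PoSemiring.mul_le_left a v) hax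
      · refine lt_of_le_of_ne (PoSemiring.mul_le_left a v) ?_
        intro hba
        apply hw0
        have hwa0 : w * a = 0 := by
          calc w * a = w * (a * v) := by rw [hba]
            _ = (w * v) * a := by ring
            _ = 0 := by rw [hwv0, zero_mul]
        have : w ≤ 0 := by
          calc w = w * w := hww.symm
            _ ≤ w * a := PoSemiring.mul_left_mono w w a
                (PoSemiring.zero_le_elem w) hwa
            _ = 0 := hwa0
        exact le_antisymm this (PoSemiring.zero_le_elem w)
    -- recursive chain
    let T := {a : A // a * a = a ∧ ¬ a ≤ p ∧ a ≤ x}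
    have stepT : ∀ t : T, ∃ s : T, s.1 < t.1 := by
      rintro ⟨a, haa, hap, hax⟩
      obtain ⟨b, h1, h2, h3, h4⟩ := step a haa hap hax
      exact ⟨⟨b, h1, h2, h3⟩, h4⟩
    choose next hnext using stepT
    let g : ℕ → T := fun k => Nat.rec (⟨e, hee, hep, hex⟩ : T) (fun _ t => next t) k
    exact hdcc ⟨fun k => (g k).1, fun k => hnext (g k)⟩
  -- from x^(n+1) ≤ p conclude x ≤ p by primality
  have hxp : x ≤ p := by
    have : ∀ m : ℕ, x ^ (m + 1) ≤ p → x ≤ p := by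
      intro m
      induction m with
      | zero => intro h; simpa using h
      | succ m ih =>
        intro h
        have : x * x ^ (m + 1) ≤ p := by
          rw [← pow_succ']
          exact h
        rcases hp.2 x (x ^ (m + 1)) this with h' | h'
        · exact h'
        · exact ih h'
    exact this n hep
  exact le_antisymm hpx hxp
end

section
/- Let A be a po-semiring satisfying condition (C1) and containing no infinite set of orthogonal idempotents. Then every prime element of A is a maximal element of A. -/
theorem prime_is_maximal_of_condC1 {A : Type*} [PoSemiring A] [Nontrivial A]
    (hC1 : CondC1 A) (horth : NoInfiniteOrthogonalIdempotents A)
    (p : A) (hp : IsPrimeElem p) : IsMaximalElem p := by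
  classical
  obtain ⟨hp1, hprime⟩ := hp
  refine ⟨hp1, fun x hpx hx1 => ?_⟩
  by_contra hne
  have hxp : ¬ x ≤ p := fun h => hne (le_antisymm hpx h)
  have zle : ∀ a : A, 0 ≤ a := PoSemiring.zero_le_elem
  have le1 : ∀ a : A, a ≤ 1 := PoSemiring.le_one_elem
  have mulmono : ∀ a b c : A, b ≤ c → a * b ≤ a * c :=
    fun a b c h => PoSemiring.mul_left_mono a b c (zle a) h
  have mulmono' : ∀ a b c : A, a ≤ b → a * c ≤ b * c := by
    intro a b c h
    rw [mul_comm a c, mul_comm b c]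
    exact mulmono c a b h
  have mull : ∀ a b : A, a * b ≤ a := by
    intro a b
    have := mulmono a b 1 (le1 b)
    rwa [mul_one] at this
  have mulr : ∀ a b : A, a * b ≤ b := by
    intro a b; rw [mul_comm]; exact mull b a
  have eq0 : ∀ a : A, a ≤ 0 → a = 0 := fun a h => le_antisymm h (zle a)
  -- an idempotent e ≤ y is absorbed: y * e = e
  have absorb : ∀ e y : A, e * e = e → e ≤ y → y * e = e := by
    intro e y hee hey
    have h1 : e * e ≤ e * y := mulmono e e y hey
    rw [hee] at h1
    exact le_antisymm (by rw [mul_comm]; exact mull e y) (by rwa [mul_comm e y] at h1)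
  -- if w,v are idempotents with w+v=1, they can't both be ≤ p
  have notboth : ∀ w v : A, w * w = w → v * v = v → w + v = 1 → w ≤ p → v ≤ p → False := by
    intro w v hww hvv hwv hwp hvp
    have : p = 1 := by
      calc p = p * (w + v) := by rw [hwv, mul_one]
        _ = p * w + p * v := by ring
        _ = w + v := by rw [absorb w p hww hwp, absorb v p hvv hvp]
        _ = 1 := hwv
    exact hp1 this
  -- if w,v are idempotents with w+v=1 and both ≤ x, then x = 1, contradiction
  have xone : ∀ w v : A, w * w = w → v * v = v → w + v = 1 → w ≤ x → v ≤ x → False := by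
    intro w v hww hvv hwv hwx hvx
    have : x = 1 := by
      calc x = x * (w + v) := by rw [hwv, mul_one]
        _ = x * w + x * v := by ring
        _ = w + v := by rw [absorb w x hww hwx, absorb v x hvv hvx]
        _ = 1 := hwv
    exact (ne_of_lt hx1) this
  -- prime absorbs powers
  have primepow : ∀ (k : ℕ) (u : A), u ^ (k + 1) ≤ p → u ≤ p := by
    intro k
    induction k with
    | zero => intro u h; rwa [pow_one] at h
    | succ n ih =>
      intro u h
      rw [pow_succ, mul_comm] at h
      rcases hprime u (u ^ (n + 1)) h with h' | h'
      · exact h'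
      · exact ih u h'
  have notnil : ∀ u : A, ¬ u ≤ p → ¬ IsNilpotent u := by
    intro u hu ⟨k, hk⟩
    cases k with
    | zero =>
      rw [pow_zero] at hk
      exact hu (le_trans (le1 u) (hk ▸ zle p))
    | succ n =>
      exact hu (primepow n u (hk ▸ zle p))
  -- the key step: from e with e*x ≰ p, produce a new pair (e', w)
  have key : ∀ e : A, ¬ (e * x ≤ p) →
      ∃ s : A × A, s.2 ≠ 0 ∧ s.2 * s.2 = s.2 ∧ s.2 ≤ e * x ∧ s.1 * s.2 = 0 ∧
        ¬ (s.1 * x ≤ p) ∧ s.1 ≤ e := by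
    intro e he
    obtain ⟨w, v, hw0, hww, hvv, hwex, hwv1, hwv0⟩ := hC1 (e * x) (notnil (e * x) he)
    have hwvp : w * v ≤ p := hwv0 ▸ zle p
    rcases hprime w v hwvp with hwp | hvp
    · refine ⟨(e * v, w), hw0, hww, hwex, ?_, ?_, mull e v⟩
      · show e * v * w = 0
        have h' : e * v * w = e * (w * v) := by ring
        rw [h', hwv0, mul_zero]
      · intro h
        rw [mul_comm e v, mul_assoc] at h
        rcases hprime v (e * x) h with h' | h'
        · exact notboth w v hww hvv hwv1 hwp h'
        · exact he h'
    · exact (xone w v hww hvv hwv1 (le_trans hwex (mulr e x)) (le_trans hvp hpx)).elim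
  -- iterate to build an infinite orthogonal family of idempotents
  let g : ℕ → {e : A // ¬ (e * x ≤ p)} := fun n =>
    Nat.rec (motive := fun _ => {e : A // ¬ (e * x ≤ p)})
      ⟨1, by rwa [one_mul]⟩
      (fun _ ih =>
        ⟨(Classical.choose (key ih.1 ih.2)).1,
         (Classical.choose_spec (key ih.1 ih.2)).2.2.2.2.1⟩) n
  let w : ℕ → A := fun n => (Classical.choose (key (g n).1 (g n).2)).2
  have gsucc : ∀ n, (g (n + 1)).1 = (Classical.choose (key (g n).1 (g n).2)).1 :=
    fun n => rfl
  have spec : ∀ n, w n ≠ 0 ∧ w n * w n = w n ∧ w n ≤ (g n).1 * x ∧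
      (g (n + 1)).1 * w n = 0 ∧ ¬ ((g (n + 1)).1 * x ≤ p) ∧ (g (n + 1)).1 ≤ (g n).1 := by
    intro n
    have h := Classical.choose_spec (key (g n).1 (g n).2)
    rw [gsucc n]
    exact h
  have gmono' : ∀ i k : ℕ, (g (i + k)).1 ≤ (g i).1 := by
    intro i k
    induction k with
    | zero => exact le_refl _
    | succ n ih => exact le_trans ((spec (i + n)).2.2.2.2.2) ih
  have gmono : ∀ i j : ℕ, i ≤ j → (g j).1 ≤ (g i).1 := by
    intro i j hij
    obtain ⟨k, rfl⟩ := Nat.exists_eq_add_of_le hij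
    exact gmono' i k
  have orth : ∀ i j : ℕ, i < j → w j * w i = 0 := by
    intro i j hij
    have h1 : w j ≤ (g j).1 := le_trans (spec j).2.2.1 (mull (g j).1 x)
    have h2 : (g j).1 ≤ (g (i + 1)).1 := gmono (i + 1) j hij
    have h3 : w j * w i ≤ (g (i + 1)).1 * w i :=
      mulmono' (w j) ((g (i + 1)).1) (w i) (le_trans h1 h2)
    rw [(spec i).2.2.2.1] at h3
    exact eq0 _ h3
  have winj : Function.Injective w := by
    intro i j hij
    by_contra hne'
    rcases Nat.lt_or_ge i j with h | h
    · have := orth i j h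
      rw [hij] at this
      exact (spec j).1 ((spec j).2.1 ▸ this)
    · have hj : j < i := lt_of_le_of_ne h (Ne.symm hne')
      have := orth j i hj
      rw [hij] at this
      exact (spec j).1 ((spec j).2.1 ▸ this)
  have hfin : (Set.range w).Finite := by
    apply horth
    · rintro e ⟨n, rfl⟩
      exact ⟨(spec n).1, (spec n).2.1⟩
    · rintro e ⟨n, rfl⟩ f ⟨m, rfl⟩ hnm
      have hnm' : n ≠ m := fun h => hnm (by rw [h])
      rcases Nat.lt_or_ge n m with h | h
      · rw [mul_comm]; exact orth n m h
      · exact orth m n (lt_of_le_of_ne h (Ne.symm hnm'))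
  exact (Set.infinite_range_of_injective winj) hfin
end

section
/- Let R be a commutative ring containing no infinite set of orthogonal idempotents and such that every non-nilpotent ideal of R contains a nonzero idempotent element. Then every prime ideal of R is a maximal ideal. -/
/-- `R` contains no infinite set of orthogonal idempotents. -/
def NoInfiniteOrthogonalIdempotentsRing (R : Type*) [CommRing R] : Prop :=
  ∀ S : Set R, (∀ e ∈ S, e ≠ 0 ∧ e * e = e) →
    (∀ e ∈ S, ∀ f ∈ S, e ≠ f → e * f = 0) → S.Finite

/-!
Idempotents of a commutative ring form a Boolean algebra, ordered by `e ≤ f ↔ e * f = e`.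
A strictly decreasing chain `f₀ > f₁ > ⋯` in it yields the nonzero orthogonal idempotents
`fₙ \ fₙ₊₁`, so the finiteness hypothesis makes this order well founded, and there is an
idempotent `g ∉ P` minimal with this property. Given `x ∉ P`, the ideal `(x g)` is not nilpotent
(it is not contained in `P`), so it contains a nonzero idempotent `e = c x g ≤ g`. Minimality
of `g` forces `g (1 - e) ∈ P`, hence `1 - e = 1 - x (c g) ∈ P`: `x` is invertible modulo `P`.
-/

section

open Function

variable {R : Type*} [CommRing R]

namespace NoInfiniteOrthogonalIdempotentsRing

theorem exists_eq_bot_of_pairwise_disjoint (horth : NoInfiniteOrthogonalIdempotentsRing R)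
    (e : ℕ → {a : R // IsIdempotentElem a}) (he : Pairwise (Disjoint on e)) : ∃ n, e n = ⊥ := by
  by_contra! hne
  have hinj : Injective e := fun m n hmn => by
    by_contra h
    have hdisj : Disjoint (e m) (e n) := he h
    rw [hmn] at hdisj
    exact hne n (disjoint_self.mp hdisj)
  refine Set.infinite_range_of_injective (Subtype.val_injective.comp hinj) (horth _ ?_ ?_)
  · rintro _ ⟨n, rfl⟩
    exact ⟨fun h => hne n (Subtype.ext h), (e n).2⟩
  · rintro _ ⟨m, rfl⟩ _ ⟨n, rfl⟩ hmn
    exact congrArg Subtype.val (disjoint_iff.mp (he fun h => hmn (by rw [h])))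

theorem wellFoundedLT (horth : NoInfiniteOrthogonalIdempotentsRing R) :
    WellFoundedLT {a : R // IsIdempotentElem a} := by
  refine ⟨wellFounded_iff_isEmpty_descending_chain.mpr ⟨fun ⟨f, hf⟩ => ?_⟩⟩
  have hanti : Antitone f := (strictAnti_nat_of_succ_lt hf).antitone
  obtain ⟨n, hn⟩ := horth.exists_eq_bot_of_pairwise_disjoint (fun n => f n \ f (n + 1)) <|
    (pairwise_disjoint_on _).mpr fun m n hmn =>
      Disjoint.mono_right (sdiff_le.trans (hanti hmn)) disjoint_sdiff_self_left
  exact (hf n).not_ge (sdiff_eq_bot_iff.mp hn)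

end NoInfiniteOrthogonalIdempotentsRing

theorem Ideal.isMaximal_of_forall_exists_mul_sub_one_mem {P : Ideal R} (hP : P ≠ ⊤)
    (h : ∀ x ∉ P, ∃ y, x * y - 1 ∈ P) : P.IsMaximal := by
  refine Ideal.isMaximal_iff.mpr ⟨(P.ne_top_iff_one).mp hP, fun J x hPJ hx hxJ => ?_⟩
  obtain ⟨y, hy⟩ := h x hx
  simpa using J.sub_mem (J.mul_mem_right y hxJ) (hPJ hy)

theorem Ideal.IsPrime.exists_mul_sub_one_mem_of_minimal {P : Ideal R} (hP : P.IsPrime)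
    (hidem : ∀ I : Ideal R, ¬ IsNilpotent I → ∃ e ∈ I, e ≠ (0 : R) ∧ e * e = e)
    {g : {a : R // IsIdempotentElem a}} (hg : Minimal (fun a => a.1 ∉ P) g)
    {x : R} (hx : x ∉ P) : ∃ y, x * y - 1 ∈ P := by
  have hxg : x * g.1 ∉ P := fun h => (hP.mem_or_mem h).elim hx hg.prop
  have hnil : ¬ IsNilpotent (Ideal.span {x * g.1}) := fun ⟨n, hn⟩ =>
    hxg (hP.le_of_pow_le (by rw [hn]; exact bot_le) (Ideal.mem_span_singleton_self _))
  obtain ⟨e, he, he0, heidem⟩ := hidem _ hnil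
  obtain ⟨c, rfl⟩ := Ideal.mem_span_singleton'.mp he
  let E : {a : R // IsIdempotentElem a} := ⟨_, heidem⟩
  have hEg : E ≤ g := show c * (x * g.1) * g.1 = c * (x * g.1) by
    rw [mul_assoc, mul_assoc, g.2.eq]
  have hgE : (g \ E).1 ∈ P := by
    by_contra h
    have hdisj := (le_sdiff.mp (hg.2 h sdiff_le)).2
    exact he0 (congrArg Subtype.val (disjoint_self.mp (hdisj.mono_left hEg)))
  have h1E : 1 - c * (x * g.1) ∈ P := (hP.mem_or_mem hgE).resolve_left hg.prop
  refine ⟨c * g.1, ?_⟩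
  rw [← P.neg_mem_iff]
  convert h1E using 1
  ring

end

theorem prime_ideal_is_maximal {R : Type*} [CommRing R]
    (horth : NoInfiniteOrthogonalIdempotentsRing R)
    (hidem : ∀ I : Ideal R, ¬ IsNilpotent I → ∃ e ∈ I, e ≠ (0 : R) ∧ e * e = e)
    (P : Ideal R) (hP : P.IsPrime) : P.IsMaximal := by
  obtain ⟨g, hg⟩ := WellFounded.wellFoundedLT_iff_exists_minimal.mp horth.wellFoundedLT
    {a : {a : R // IsIdempotentElem a} | a.1 ∉ P} ⟨⊤, (P.ne_top_iff_one).mp hP.ne_top⟩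
  exact Ideal.isMaximal_of_forall_exists_mul_sub_one_mem hP.ne_top fun x hx =>
    hP.exists_mul_sub_one_mem_of_minimal hidem hg hx
end

section
/- Let A be a po-semiring in which every element other than 0 and 1 is a zero divisor (Z(A) = A \ {0, 1}). If ACC holds for the elements of A (there is no infinite strictly ascending chain of elements), or if ACC holds for the principal annihilating ideals ann_A(u) = {x ∈ A : x·u = 0} of A ordered by inclusion, then A has only finitely many maximal elements. -/
/-- The principal annihilating ideal of `u`. -/
def annSet {A : Type*} [PoSemiring A] (u : A) : Set A := {x : A | x * u = 0}

theorem finitely_many_maximal_elems {A : Type*} [PoSemiring A] [Nontrivial A]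
    (hZ : zdSet A = {a : A | a ≠ 0 ∧ a ≠ 1})
    (hacc : ElemACC A ∨ ¬ ∃ f : ℕ → A, ∀ n : ℕ, annSet (f n) ⊂ annSet (f (n + 1))) :
    {m : A | IsMaximalElem m}.Finite := by
  have zle : ∀ x : A, (0:A) ≤ x := PoSemiring.zero_le_elem
  have le1 : ∀ x : A, x ≤ (1:A) := PoSemiring.le_one_elem
  have le_add : ∀ x z : A, x ≤ x + z := fun x z => by
    have := PoSemiring.add_right_mono 0 z x (zle z)
    rwa [zero_add, add_comm] at this
  by_cases h0 : IsMaximalElem (0 : A)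
  · refine Set.Finite.subset (Set.finite_singleton (0:A)) ?_
    intro m hm
    have hm1 : m < 1 := lt_of_le_of_ne (le1 m) hm.1
    exact (h0.2 m (zle m) hm1).symm
  by_contra hinf
  rw [← Set.not_infinite, not_not] at hinf
  set e := hinf.natEmbedding with he
  set m : ℕ → A := fun n => (e n : A) with hmdef
  have hmax : ∀ n, IsMaximalElem (m n) := fun n => (e n).2
  have hmne : ∀ i j, i ≠ j → m i ≠ m j := by
    intro i j hij h
    exact hij (e.injective (Subtype.ext h))
  have hsum : ∀ i j, i ≠ j → m i + m j = 1 := by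
    intro i j hij
    by_contra hne
    have hlt : m i + m j < 1 := lt_of_le_of_ne (le1 _) hne
    have h1 := (hmax i).2 _ (le_add (m i) (m j)) hlt
    have h2 : m j ≤ m i + m j := by rw [add_comm]; exact le_add _ _
    have h3 := (hmax j).2 _ h2 hlt
    exact hmne i j hij (h1.trans h3.symm)
  have hne0 : ∀ n, m n ≠ 0 := by
    intro n h
    exact h0 (h ▸ hmax n)
  have hbex : ∀ n, ∃ c : A, c ≠ 0 ∧ m n * c = 0 := by
    intro n
    have hmem : m n ∈ zdSet A := by
      rw [hZ]; exact ⟨hne0 n, (hmax n).1⟩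
    obtain ⟨-, c, hc0, hc⟩ := hmem
    exact ⟨c, hc0, hc⟩
  choose b hb0 hb using hbex
  have hbm0 : ∀ k, b k * m k = 0 := fun k => by rw [mul_comm]; exact hb k
  have hbm : ∀ i k, i ≠ k → b k * m i = b k := by
    intro i k hik
    have : b k * (m i + m k) = b k := by rw [hsum i k hik, mul_one]
    rwa [mul_add, hbm0, add_zero] at this
  set s : ℕ → A := fun n => ∏ i ∈ Finset.range (n+1), m i with hsdef
  have hs_succ : ∀ n, s (n+1) = s n * m (n+1) := by
    intro n
    simp only [hsdef]
    rw [Finset.prod_range_succ]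
  have hbs1 : ∀ k j, j < k → b k * s j = b k := by
    intro k j
    induction j with
    | zero =>
      intro hk
      have : s 0 = m 0 := by simp [hsdef]
      rw [this]
      exact hbm 0 k (by omega)
    | succ j ih =>
      intro hk
      rw [hs_succ, ← mul_assoc, ih (by omega)]
      exact hbm (j+1) k (by omega)
  have hbs0 : ∀ k j, k ≤ j → b k * s j = 0 := by
    intro k j hkj
    have hdvd : m k ∣ s j :=
      Finset.dvd_prod_of_mem m (Finset.mem_range.mpr (by omega))
    obtain ⟨c, hc⟩ := hdvd
    rw [hc, ← mul_assoc, hbm0, zero_mul]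
  have hann : ∀ n, annSet (s n) ⊂ annSet (s (n+1)) := by
    intro n
    constructor
    · intro x hx
      have hx' : x * s n = 0 := hx
      show x * s (n+1) = 0
      rw [hs_succ, ← mul_assoc, hx', zero_mul]
    · intro hsub
      have h1 : b (n+1) ∈ annSet (s (n+1)) := hbs0 (n+1) (n+1) le_rfl
      have h2 : b (n+1) ∈ annSet (s n) := hsub h1
      have h3 : b (n+1) * s n = b (n+1) := hbs1 (n+1) n (by omega)
      exact hb0 (n+1) (h3 ▸ h2)
  rcases hacc with hE | hA
  · set g : ℕ → A := fun n => ∑ i ∈ Finset.range (n+1), b (i+1) with hgdef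
    have hg_succ : ∀ n, g (n+1) = g n + b (n+2) := by
      intro n
      simp only [hgdef]
      rw [Finset.sum_range_succ]
    have hgs : ∀ n, g n * s n = b (n+1) := by
      intro n
      simp only [hgdef]
      rw [Finset.sum_mul, Finset.sum_range_succ, hbs1 (n+1) n (by omega)]
      rw [Finset.sum_eq_zero, zero_add]
      intro i hi
      exact hbs0 (i+1) n (by have := Finset.mem_range.mp hi; omega)
    have hgs0 : ∀ n, g n * s (n+1) = 0 := by
      intro n
      simp only [hgdef]
      rw [Finset.sum_mul]
      refine Finset.sum_eq_zero fun i hi => ?_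
      exact hbs0 (i+1) (n+1) (by have := Finset.mem_range.mp hi; omega)
    refine hE ⟨g, fun n => ?_⟩
    refine lt_of_le_of_ne ?_ ?_
    · rw [hg_succ]; exact le_add _ _
    · intro h
      have h1 : g n * s (n+1) = 0 := hgs0 n
      have h2 : g (n+1) * s (n+1) = b (n+2) := hgs (n+1)
      rw [← h, h1] at h2
      exact hb0 (n+2) h2.symm
  · exact hA ⟨s, hann⟩
end

section
/- Let A be a po-semiring satisfying condition (C1) in which ACC holds for elements of A (there is no infinite strictly ascending chain of elements). Then A has only finitely many maximal elements. -/
/-!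
In a po-semiring `a + b` is the least upper bound of `a` and `b`, and maximal elements are prime.
A complementary pair of idempotents `w + v = 1`, `w * v = 0` therefore splits the maximal elements
into those above `w` and those above `v`. Suppose infinitely many maximal elements lie above `c`,
where `c` has a complement `e`. For two of them `m ≠ m'`, the element `e * m` is not below the prime
`m'`, hence not nilpotent, and (C1) yields a complementary pair `(w, v)` with `0 ≠ w ≤ e * m`.
Then `c + w` or `c + v` still lies below infinitely many maximal elements and is again complemented.
Both are strictly above `c`: `w ≤ c` would force `w = w * w ≤ e * c = 0`, and `v ≤ c` would force
`e ≤ w ≤ m`, hence `1 = e + c ≤ m`. So no such `c` is maximal, while ACC provides a maximal one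
as soon as `c = 0` qualifies.
-/

namespace PoSemiring

variable {A : Type*} [PoSemiring A]

protected lemma le_add_left (a b : A) : b ≤ a + b := by
  simpa using add_right_mono 0 a b (zero_le_elem a)

protected lemma le_add_right (a b : A) : a ≤ a + b :=
  add_comm b a ▸ PoSemiring.le_add_left b a

protected lemma one_le_iff {a : A} : 1 ≤ a ↔ a = 1 :=
  ⟨fun h => le_antisymm (le_one_elem a) h, fun h => h.ge⟩

protected lemma le_zero_iff {a : A} : a ≤ 0 ↔ a = 0 :=
  ⟨fun h => le_antisymm h (zero_le_elem a), fun h => h.le⟩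

protected lemma add_self (a : A) : a + a = a := by
  have h11 : (1 : A) + 1 = 1 :=
    PoSemiring.one_le_iff.mp (PoSemiring.le_add_right 1 1)
  rw [← mul_one a, ← mul_add, h11]

protected lemma add_le {a b c : A} (ha : a ≤ c) (hb : b ≤ c) : a + b ≤ c :=
  calc a + b ≤ c + b := add_right_mono a c b ha
    _ = b + c := add_comm c b
    _ ≤ c + c := add_right_mono b c c hb
    _ = c := PoSemiring.add_self c

protected lemma lt_add_of_not_le {a b : A} (h : ¬ b ≤ a) : a < a + b :=
  lt_of_le_of_ne (PoSemiring.le_add_right a b) fun hab => h (hab ▸ PoSemiring.le_add_left a b)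

protected lemma mul_le_mul_left (a : A) {b c : A} (h : b ≤ c) : a * b ≤ a * c :=
  mul_left_mono a b c (zero_le_elem a) h

protected lemma mul_le_mul {a b c d : A} (hab : a ≤ b) (hcd : c ≤ d) : a * c ≤ b * d :=
  calc a * c ≤ a * d := PoSemiring.mul_le_mul_left a hcd
    _ = d * a := mul_comm a d
    _ ≤ d * b := PoSemiring.mul_le_mul_left d hab
    _ = b * d := mul_comm d b

protected lemma mul_le_left_s11 (a b : A) : a * b ≤ a := by
  simpa using PoSemiring.mul_le_mul_left a (le_one_elem b)

protected lemma mul_le_right_s11 (a b : A) : a * b ≤ b :=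
  mul_comm b a ▸ PoSemiring.mul_le_left_s11 b a

end PoSemiring

section

variable {A : Type*} [PoSemiring A]

lemma IsMaximalElem.eq_of_le {m m' : A} (hm : IsMaximalElem m) (hm' : IsMaximalElem m')
    (h : m ≤ m') : m = m' :=
  hm.2 m' h (lt_of_le_of_ne (PoSemiring.le_one_elem m') hm'.1)

lemma IsMaximalElem.isPrimeElem {m : A} (hm : IsMaximalElem m) : IsPrimeElem m := by
  refine ⟨hm.1, fun x y hxy => or_iff_not_imp_left.mpr fun hx => ?_⟩
  have hmx : m + x = 1 := by
    by_contra hne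
    have hm_eq := hm.2 (m + x) (PoSemiring.le_add_right m x)
      (lt_of_le_of_ne (PoSemiring.le_one_elem _) hne)
    exact hx (hm_eq ▸ PoSemiring.le_add_left m x)
  calc y = y * m + y * x := by rw [← mul_add, hmx, mul_one]
    _ ≤ m := PoSemiring.add_le (PoSemiring.mul_le_right_s11 y m) (mul_comm x y ▸ hxy)

lemma IsPrimeElem.le_of_pow_le {p x : A} (hp : IsPrimeElem p) :
    ∀ {k : ℕ}, x ^ k ≤ p → x ≤ p
  | 0, h => absurd (PoSemiring.one_le_iff.mp (pow_zero x ▸ h)) hp.1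
  | _ + 1, h => (hp.2 _ _ (pow_succ x _ ▸ h)).elim hp.le_of_pow_le id

lemma IsNilpotent.le_of_isPrimeElem {p x : A} (hx : IsNilpotent x) (hp : IsPrimeElem p) :
    x ≤ p := by
  obtain ⟨k, hk⟩ := hx
  exact hp.le_of_pow_le (hk ▸ PoSemiring.zero_le_elem p)

def maximalsAbove (c : A) : Set A :=
  {m | IsMaximalElem m ∧ c ≤ m}

lemma maximalsAbove_zero : maximalsAbove (0 : A) = {m | IsMaximalElem m} := by
  simp [maximalsAbove, PoSemiring.zero_le_elem]

/-- `e` and `c` are complementary orthogonal idempotents: idempotency follows, as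
`e = e * (e + c) = e * e`. -/
def IsComplementPair (e c : A) : Prop :=
  e + c = 1 ∧ e * c = 0

lemma isComplementPair_one_zero : IsComplementPair (1 : A) 0 :=
  ⟨add_zero 1, mul_zero 1⟩

namespace IsComplementPair

variable {e c x y : A}

lemma symm (h : IsComplementPair e c) : IsComplementPair c e :=
  ⟨add_comm e c ▸ h.1, mul_comm e c ▸ h.2⟩

lemma not_le_of_le (h : IsComplementPair e c) {p : A} (hp : IsPrimeElem p) (hc : c ≤ p) :
    ¬ e ≤ p :=
  fun he => hp.1 (PoSemiring.one_le_iff.mp (h.1 ▸ PoSemiring.add_le he hc))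

lemma le_or_le_of_isPrimeElem (h : IsComplementPair e c) {p : A} (hp : IsPrimeElem p) :
    e ≤ p ∨ c ≤ p :=
  hp.2 e c (h.2 ▸ PoSemiring.zero_le_elem p)

lemma refine (h : IsComplementPair e c) (hxy : IsComplementPair x y) :
    IsComplementPair (e * y) (c + x) := by
  refine ⟨PoSemiring.one_le_iff.mp ?_, ?_⟩
  · have hx : x ≤ e * y + (c + x) :=
      (PoSemiring.le_add_left c x).trans (PoSemiring.le_add_left _ _)
    calc (1 : A) = e * x + e * y + c := by rw [← mul_add, hxy.1, mul_one, h.1]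
      _ ≤ e * y + (c + x) :=
        PoSemiring.add_le
          (PoSemiring.add_le ((PoSemiring.mul_le_right_s11 e x).trans hx)
            (PoSemiring.le_add_right _ _))
          ((PoSemiring.le_add_right c x).trans (PoSemiring.le_add_left _ _))
  · rw [mul_add, mul_right_comm, h.2, zero_mul, mul_assoc, mul_comm y, hxy.2, mul_zero, add_zero]

lemma maximalsAbove_subset_union (hxy : IsComplementPair x y) (c : A) :
    maximalsAbove c ⊆ maximalsAbove (c + x) ∪ maximalsAbove (c + y) := by
  rintro m ⟨hm, hcm⟩
  rcases hxy.le_or_le_of_isPrimeElem hm.isPrimeElem with hx | hy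
  · exact Or.inl ⟨hm, PoSemiring.add_le hcm hx⟩
  · exact Or.inr ⟨hm, PoSemiring.add_le hcm hy⟩

lemma not_isNilpotent_mul (h : IsComplementPair e c) {m m' : A} (hm : m ∈ maximalsAbove c)
    (hm' : m' ∈ maximalsAbove c) (hne : m ≠ m') : ¬ IsNilpotent (e * m) := by
  intro hnil
  have hp := hm'.1.isPrimeElem
  rcases hp.2 e m (hnil.le_of_isPrimeElem hp) with he | hmm'
  · exact h.not_le_of_le hp hm'.2 he
  · exact hne (hm.1.eq_of_le hm'.1 hmm')

theorem exists_lt_of_infinite (hC1 : CondC1 A) (h : IsComplementPair e c)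
    (hinf : (maximalsAbove c).Infinite) :
    ∃ e' c', IsComplementPair e' c' ∧ (maximalsAbove c').Infinite ∧ c < c' := by
  obtain ⟨m, hm, m', hm', hne⟩ := hinf.nontrivial
  obtain ⟨w, v, hw0, hww, -, hwem, hwv1, hwv0⟩ := hC1 (e * m) (h.not_isNilpotent_mul hm hm' hne)
  have hwv : IsComplementPair w v := ⟨hwv1, hwv0⟩
  have hwe : w ≤ e := hwem.trans (PoSemiring.mul_le_left_s11 e m)
  have hwm : w ≤ m := hwem.trans (PoSemiring.mul_le_right_s11 e m)
  have hw : ¬ w ≤ c := fun hwc => hw0 <| PoSemiring.le_zero_iff.mp <|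
    calc w = w * w := hww.symm
      _ ≤ e * c := PoSemiring.mul_le_mul hwe hwc
      _ = 0 := h.2
  have hv : ¬ v ≤ c := fun hvc => h.not_le_of_le hm.1.isPrimeElem hm.2 <|
    calc e = e * w + e * v := by rw [← mul_add, hwv.1, mul_one]
      _ ≤ m := PoSemiring.add_le ((PoSemiring.mul_le_right_s11 e w).trans hwm)
          ((PoSemiring.mul_le_mul_left e hvc).trans (h.2 ▸ PoSemiring.zero_le_elem m))
  rcases Set.infinite_union.mp (hinf.mono (hwv.maximalsAbove_subset_union c)) with hinf' | hinf'
  · exact ⟨e * v, c + w, h.refine hwv, hinf', PoSemiring.lt_add_of_not_le hw⟩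
  · exact ⟨e * w, c + v, h.refine hwv.symm, hinf', PoSemiring.lt_add_of_not_le hv⟩

end IsComplementPair

lemma ElemACC.wellFounded_gt (h : ElemACC A) : WellFounded ((· > ·) : A → A → Prop) :=
  wellFounded_iff_isEmpty_descending_chain.mpr ⟨fun f => h ⟨f.1, f.2⟩⟩

end

theorem finitely_many_maximal_elems_of_condC1_acc_general {A : Type*} [PoSemiring A]
    (hC1 : CondC1 A) (hacc : ElemACC A) :
    {m : A | IsMaximalElem m}.Finite := by
  by_contra hfin
  obtain ⟨c, ⟨e, hec, hinf⟩, hmax⟩ := hacc.wellFounded_gt.has_min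
    {c : A | ∃ e, IsComplementPair e c ∧ (maximalsAbove c).Infinite}
    ⟨0, 1, isComplementPair_one_zero, by rwa [maximalsAbove_zero]⟩
  obtain ⟨e', c', hc', hinf', hlt⟩ := hec.exists_lt_of_infinite hC1 hinf
  exact hmax c' ⟨e', hc', hinf'⟩ hlt

theorem finitely_many_maximal_elems_of_condC1_acc {A : Type*} [PoSemiring A] [Nontrivial A]
    (hC1 : CondC1 A) (hacc : ElemACC A) :
    {m : A | IsMaximalElem m}.Finite :=
  finitely_many_maximal_elems_of_condC1_acc_general hC1 hacc
end

section
/- Let R be a commutative Noetherian ring in which every non-nilpotent ideal contains a nonzero idempotent element. Then R is semilocal, i.e., R has only finitely many maximal ideals. -/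
/-!
Choose an idempotent `e ∈ I` for which `span {e}` is maximal among the idempotent-generated ideals
inside `I`. Then `I ⊓ span {1 - e}` contains no nonzero idempotent `f`, since `e + f` would
generate a larger one, so by hypothesis it is nilpotent. Now let `P ≤ I` with `P` prime and `I`
proper: `e ∈ P` because `e (1 - e) = 0` and `1 - e ∉ I`, and `(1 - e) x ∈ P` for `x ∈ I`
because nilpotent ideals lie in every prime, so `x = e x + (1 - e) x ∈ P`. Hence every prime is
maximal, and a Noetherian ring of Krull dimension zero is Artinian, so it has finitely many
maximal ideals.
-/

section

open Ideal

variable {R : Type*} [CommRing R]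

lemma IsIdempotentElem.eq_zero_of_mem_span_singleton {e f : R} (hf : IsIdempotentElem f)
    (hef : e * f = 0) (hfe : f ∈ span {e}) : f = 0 := by
  obtain ⟨c, rfl⟩ := mem_span_singleton'.mp hfe
  rw [← hf.eq, mul_assoc, hef, mul_zero]

lemma exists_isIdempotentElem_isNilpotent_inf_span_one_sub [IsNoetherianRing R]
    (hidem : ∀ I : Ideal R, ¬ IsNilpotent I → ∃ e ∈ I, e ≠ 0 ∧ e * e = e)
    (I : Ideal R) : ∃ e ∈ I, IsIdempotentElem e ∧ IsNilpotent (I ⊓ span {1 - e}) := by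
  obtain ⟨_, ⟨e, heI, he, rfl⟩, hmax⟩ := set_has_maximal_iff_noetherian.mpr ‹_›
    {J | ∃ e ∈ I, IsIdempotentElem e ∧ J = span {e}}
    ⟨⊥, 0, I.zero_mem, .zero, span_zero.symm⟩
  refine ⟨e, heI, he, not_not.mp fun hK ↦ ?_⟩
  obtain ⟨f, ⟨hfI, hf1e⟩, hf0, hf⟩ := hidem _ hK
  have hef : e * f = 0 := by
    obtain ⟨c, rfl⟩ := mem_span_singleton'.mp hf1e
    rw [mul_left_comm, he.mul_one_sub_self, mul_zero]
  have hle : span {e} ≤ span {e + f} := span_singleton_le_iff_mem _ |>.mpr <|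
    mem_span_singleton'.mpr ⟨e, by rw [mul_add, he.eq, hef, add_zero]⟩
  have hge : span {e + f} ≤ span {e} := not_lt_iff_le_imp_ge.mp
    (hmax _ ⟨e + f, add_mem heI hfI, he.add hf (by rw [mul_comm f, hef, add_zero]), rfl⟩) hle
  refine hf0 (IsIdempotentElem.eq_zero_of_mem_span_singleton hf hef (hge ?_))
  exact mem_span_singleton'.mpr ⟨f, by rw [mul_add, hf, mul_comm, hef, zero_add]⟩

lemma Ideal.le_of_isNilpotent_inf_span_one_sub {P I : Ideal R} [hP : P.IsPrime] (hPI : P ≤ I)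
    (hI : I ≠ ⊤) {e : R} (heI : e ∈ I) (he : IsIdempotentElem e)
    (hK : IsNilpotent (I ⊓ span {1 - e})) : I ≤ P := by
  obtain ⟨n, hn⟩ := hK
  have h1e : 1 - e ∉ P := fun h ↦ hI <| (eq_top_iff_one I).mpr <|
    sub_add_cancel 1 e ▸ add_mem (hPI h) heI
  have heP : e ∈ P :=
    (hP.mem_or_mem (he.mul_one_sub_self ▸ P.zero_mem)).resolve_right h1e
  have hKP : I ⊓ span {1 - e} ≤ P := hP.le_of_pow_le (n := n) (hn ▸ bot_le)
  intro x hxI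
  rw [show x = e * x + (1 - e) * x by ring]
  exact add_mem (P.mul_mem_right x heP)
    (hKP ⟨I.mul_mem_left _ hxI, mem_span_singleton'.mpr ⟨x, mul_comm x _⟩⟩)

lemma Ring.krullDimLE_zero_of_forall_exists_isIdempotentElem
    (h : ∀ I : Ideal R, ∃ e ∈ I, IsIdempotentElem e ∧ IsNilpotent (I ⊓ span {1 - e})) :
    Ring.KrullDimLE 0 R := by
  refine .mk₀ fun P hP ↦
    ⟨⟨hP.ne_top, fun I hPI ↦ not_not.mp fun hI ↦ hPI.not_ge ?_⟩⟩
  obtain ⟨e, heI, he, hK⟩ := h I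
  exact le_of_isNilpotent_inf_span_one_sub hPI.le hI heI he hK

end

theorem noetherian_semilocal {R : Type*} [CommRing R] [IsNoetherianRing R]
    (hidem : ∀ I : Ideal R, ¬ IsNilpotent I → ∃ e ∈ I, e ≠ (0 : R) ∧ e * e = e) :
    {M : Ideal R | M.IsMaximal}.Finite := by
  have : Ring.KrullDimLE 0 R := Ring.krullDimLE_zero_of_forall_exists_isIdempotentElem
    (exists_isIdempotentElem_isNilpotent_inf_span_one_sub hidem)
  have : IsArtinianRing R :=
    isArtinianRing_iff_isNoetherianRing_krullDimLE_zero.mpr ⟨‹_›, ‹_›⟩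
  exact IsArtinianRing.setOfPred_isMaximal_finite R
end

section
/- Let A be a po-semiring. Then ACC holds for the elements of A (there is no infinite strictly ascending chain of elements of A) if and only if ACC holds for the hereditary ideals of A ordered by inclusion (there is no infinite strictly ascending chain of hereditary ideals). -/
/-- An ideal of a po-semiring, as a subset. -/
def IsPoIdeal {A : Type*} [PoSemiring A] (I : Set A) : Prop :=
  (0 : A) ∈ I ∧ (∀ x ∈ I, ∀ y ∈ I, x + y ∈ I) ∧ (∀ a : A, ∀ x ∈ I, a * x ∈ I)

/-- A hereditary subset: downward closed under `≤`. -/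
def IsHereditary {A : Type*} [PoSemiring A] (I : Set A) : Prop :=
  ∀ x ∈ I, ∀ y : A, y ≤ x → y ∈ I


section Aux
variable {A : Type*} [PoSemiring A]

lemma poAdd_le {x y a : A} (hx : x ≤ a) (hy : y ≤ a) : x + y ≤ a := by
  have h1 : x + y ≤ a + y := PoSemiring.add_right_mono x a y hx
  have h2 : y + a ≤ a + a := PoSemiring.add_right_mono y a a hy
  have h3 : a * (1 + 1) ≤ a * 1 :=
    PoSemiring.mul_left_mono a (1 + 1) 1 (PoSemiring.zero_le_elem a)
      (PoSemiring.le_one_elem (1 + 1))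
  have h4 : a + a ≤ a := by
    have : a * (1 + 1) = a + a := by ring
    rw [this, mul_one] at h3; exact h3
  calc x + y ≤ a + y := h1
    _ = y + a := add_comm _ _
    _ ≤ a + a := h2
    _ ≤ a := h4

lemma poMul_le {x a : A} (hx : x ≤ a) (r : A) : r * x ≤ a := by
  have h1 : r * x ≤ r * a := PoSemiring.mul_left_mono r x a (PoSemiring.zero_le_elem r) hx
  have h2 : a * r ≤ a * 1 :=
    PoSemiring.mul_left_mono a r 1 (PoSemiring.zero_le_elem a) (PoSemiring.le_one_elem r)
  calc r * x ≤ r * a := h1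
    _ = a * r := mul_comm _ _
    _ ≤ a * 1 := h2
    _ = a := mul_one a

end Aux

theorem elemACC_iff_hereditary_ideal_ACC {A : Type*} [PoSemiring A] [Nontrivial A] :
    ElemACC A ↔
      ¬ ∃ f : ℕ → Set A,
        (∀ n : ℕ, IsPoIdeal (f n) ∧ IsHereditary (f n)) ∧ ∀ n : ℕ, f n ⊂ f (n + 1) := by
  constructor
  · -- ElemACC → ideal ACC
    intro hA
    rintro ⟨f, hprop, hss⟩
    have hmono : ∀ m n : ℕ, m ≤ n → f m ⊆ f n := by
      intro m n hmn
      induction n with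
      | zero => simp_all
      | succ k ih =>
        rcases Nat.lt_or_ge m (k+1) with h | h
        · exact (ih (Nat.lt_succ_iff.mp h)).trans (hss k).subset
        · have : m = k + 1 := le_antisymm hmn h
          subst this; exact subset_rfl
    have hx : ∀ n, ∃ x, x ∈ f (n+1) ∧ x ∉ f n := by
      intro n
      obtain ⟨y, hy1, hy2⟩ := Set.exists_of_ssubset (hss n)
      exact ⟨y, hy1, hy2⟩
    choose x hx1 hx2 using hx
    set s : ℕ → A := fun n => (Finset.range (n+1)).sum x with hs
    have hsmem : ∀ n, s n ∈ f (n+1) := by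
      intro n
      induction n with
      | zero => simpa [hs] using hx1 0
      | succ k ih =>
        have : s (k+1) = s k + x (k+1) := by
          simp [hs, Finset.sum_range_succ]
        rw [this]
        exact (hprop (k+2)).1.2.1 _ (hmono (k+1) (k+2) (by omega) ih) _ (hx1 (k+1))
    apply hA
    refine ⟨s, fun n => ?_⟩
    have hseq : s (n+1) = s n + x (n+1) := by simp [hs, Finset.sum_range_succ]
    have hle : s n ≤ s (n+1) := by
      rw [hseq]
      have := PoSemiring.add_right_mono 0 (x (n+1)) (s n)
        (PoSemiring.zero_le_elem (x (n+1)))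
      rw [zero_add] at this
      calc s n ≤ x (n+1) + s n := this
        _ = s n + x (n+1) := add_comm _ _
    refine lt_of_le_of_ne hle ?_
    intro heq
    have hxle : x (n+1) ≤ s n := by
      rw [heq, hseq]
      have := PoSemiring.add_right_mono 0 (s n) (x (n+1))
        (PoSemiring.zero_le_elem (s n))
      rw [zero_add] at this
      exact this
    exact hx2 (n+1) ((hprop (n+1)).2 _ (hsmem n) _ hxle)
  · -- ideal ACC → ElemACC
    intro hI
    rintro ⟨a, ha⟩
    apply hI
    refine ⟨fun n => {y | y ≤ a n}, fun n => ⟨⟨?_, ?_, ?_⟩, ?_⟩, fun n => ?_⟩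
    · exact PoSemiring.zero_le_elem (a n)
    · intro x hx y hy; exact poAdd_le hx hy
    · intro r x hx; exact poMul_le hx r
    · intro x hx y hyx; exact le_trans hyx hx
    · constructor
      · intro y hy; exact le_trans hy (ha n).le
      · intro hsub
        have : a (n+1) ≤ a n := hsub (le_refl (a (n+1)))
        exact absurd this (not_le_of_gt (ha n))
end

section
/- Let A be a po-semiring with Z(A) ≠ ∅ that satisfies either [condition (C1) and contains no infinite set of orthogonal idempotents] or [condition (C2) and DCC holds for elements of A]. Then A is a finite set if and only if Z(A) is a finite set, and in that case the cardinality of Z(A) equals |A| − 2. -/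
namespace PoS
variable {A : Type*} [PoSemiring A]

lemma mul_le_left (a b : A) : a * b ≤ a := by
  have := PoSemiring.mul_left_mono a b 1 (PoSemiring.zero_le_elem a) (PoSemiring.le_one_elem b)
  simpa using this

structure St (A : Type*) [PoSemiring A] (x : A) where
  e : A
  y : A
  hee : e * e = e
  hye : y * e = y
  hy0 : y ≠ 0
  hyne : y ≠ e
  habs : ∀ t : A, t * e = t → x * t = y * t

def StepRel {x : A} (s s' : St A x) : Prop :=
  s'.e * s.e = s'.e ∧ s'.y < s.y ∧
    ∃ w : A, w ≠ 0 ∧ w * w = w ∧ w * s.e = w ∧ w * s'.e = 0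

lemma pow_mul_e {x : A} (s : St A x) : ∀ n : ℕ, s.y ^ (n+1) * s.e = s.y ^ (n+1) := by
  intro n
  induction n with
  | zero => simpa using s.hye
  | succ k _ =>
      have h : s.y ^ (k+2) = s.y ^ (k+1) * s.y := by ring
      rw [h, mul_assoc, s.hye]

lemma not_nilp {x : A} (hx : ∀ t : A, t ≠ 0 → x * t ≠ 0) (s : St A x) :
    ¬ IsNilpotent s.y := by
  rintro ⟨k, hk⟩
  classical
  have hex : ∃ m, s.y ^ m = 0 := ⟨k, hk⟩
  have hmz : s.y ^ Nat.find hex = 0 := Nat.find_spec hex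
  have hm0 : Nat.find hex ≠ 0 := by
    intro h
    rw [h, pow_zero] at hmz
    exact s.hy0 (by rw [← mul_one s.y, hmz, mul_zero])
  have hm1 : Nat.find hex ≠ 1 := by
    intro h; rw [h, pow_one] at hmz; exact s.hy0 hmz
  obtain ⟨j, hj⟩ : ∃ j, Nat.find hex = j + 2 := by
    rcases hn : Nat.find hex with _ | _ | j
    · exact absurd hn hm0
    · exact absurd hn hm1
    · exact ⟨j, rfl⟩
  have ht0 : s.y ^ (j+1) ≠ 0 := Nat.find_min hex (by omega)
  have hcontr : x * s.y ^ (j+1) = 0 := by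
    rw [s.habs _ (pow_mul_e s j)]
    calc s.y * s.y ^ (j+1) = s.y ^ (j+2) := by ring
    _ = 0 := by rw [← hj]; exact hmz
  exact hx _ ht0 hcontr

lemma exists_wv {x : A} (hx : ∀ t : A, t ≠ 0 → x * t ≠ 0)
    (hyp : CondC1 A ∨ (CondC2 A ∧ ElemDCC A)) (s : St A x) :
    ∃ w v : A, w ≠ 0 ∧ w * w = w ∧ v * v = v ∧ w ≤ s.y ∧ w + v = 1 ∧ w * v = 0 := by
  have hnn := not_nilp hx s
  rcases hyp with h1 | ⟨h2, hdcc⟩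
  · exact h1 s.y hnn
  · have hstab : ∃ n : ℕ, s.y ^ (n+1) = s.y ^ (n+2) := by
      by_contra hc
      push_neg at hc
      apply hdcc
      refine ⟨fun n => s.y ^ (n+1), fun n => ?_⟩
      have hle : s.y ^ (n+2) ≤ s.y ^ (n+1) := by
        have h : s.y ^ (n+2) = s.y ^ (n+1) * s.y := by ring
        rw [h]; exact mul_le_left _ _
      exact lt_of_le_of_ne hle (fun h => hc n h.symm)
    obtain ⟨n, hn⟩ := hstab
    have hstep : ∀ k : ℕ, s.y ^ (n+1+k) = s.y ^ (n+1) := by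
      intro k
      induction k with
      | zero => rfl
      | succ j ih =>
          have h : s.y ^ (n+1+(j+1)) = s.y ^ (n+1+j) * s.y := by ring
          rw [h, ih, ← pow_succ]
          exact hn.symm
    have hidem : s.y ^ (n+1) * s.y ^ (n+1) = s.y ^ (n+1) := by
      rw [← pow_add]
      have : (n+1) + (n+1) = n + 1 + (n+1) := rfl
      rw [this, hstep (n+1)]
    have hfne : s.y ^ (n+1) ≠ 0 := fun h => hnn ⟨n+1, h⟩
    obtain ⟨w, v, hw0, hww, hvv, hwf, hwv1, hwv0⟩ := h2 _ hfne hidem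
    refine ⟨w, v, hw0, hww, hvv, le_trans hwf ?_, hwv1, hwv0⟩
    have h : s.y ^ (n+1) = s.y * s.y ^ n := by ring
    rw [h]; exact mul_le_left _ _

lemma step_exists {x : A} (hx : ∀ t : A, t ≠ 0 → x * t ≠ 0)
    (hyp : CondC1 A ∨ (CondC2 A ∧ ElemDCC A)) (s : St A x) :
    ∃ s' : St A x, StepRel s s' := by
  obtain ⟨w, v, hw0, hww, hvv, hwy, hwv1, hwv0⟩ := exists_wv hx hyp s
  have hwy' : w * s.y = w := by
    refine le_antisymm (mul_le_left w s.y) ?_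
    have h1 : w * w ≤ w * s.y :=
      PoSemiring.mul_left_mono w w s.y (PoSemiring.zero_le_elem w) hwy
    rwa [hww] at h1
  have hwe : w * s.e = w := by
    calc w * s.e = (w * s.y) * s.e := by rw [hwy']
    _ = w * (s.y * s.e) := by ring
    _ = w * s.y := by rw [s.hye]
    _ = w := hwy'
  have hesplit : w + s.e * v = s.e := by
    calc w + s.e * v = w * s.e + v * s.e := by rw [hwe]; ring
    _ = (w + v) * s.e := by ring
    _ = s.e := by rw [hwv1, one_mul]
  have hee' : (s.e * v) * (s.e * v) = s.e * v := by
    calc (s.e * v) * (s.e * v) = (s.e * s.e) * (v * v) := by ring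
    _ = s.e * v := by rw [s.hee, hvv]
  have he'e : (s.e * v) * s.e = s.e * v := by
    calc (s.e * v) * s.e = (s.e * s.e) * v := by ring
    _ = s.e * v := by rw [s.hee]
  have hwe' : w * (s.e * v) = 0 := by
    calc w * (s.e * v) = (w * s.e) * v := by ring
    _ = w * v := by rw [hwe]
    _ = 0 := hwv0
  have hy'e' : (s.y * v) * (s.e * v) = s.y * v := by
    calc (s.y * v) * (s.e * v) = (s.y * s.e) * (v * v) := by ring
    _ = s.y * v := by rw [s.hye, hvv]
  have hysplit : s.y = w + s.y * v := by
    calc s.y = s.y * 1 := by rw [mul_one]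
    _ = s.y * (w + v) := by rw [hwv1]
    _ = w * s.y + s.y * v := by ring
    _ = w + s.y * v := by rw [hwy']
  have he'0 : s.e * v ≠ 0 := by
    intro h
    rw [h, add_zero] at hesplit
    apply s.hyne
    calc s.y = s.y * s.e := s.hye.symm
    _ = s.y * w := by rw [hesplit]
    _ = w * s.y := by ring
    _ = w := hwy'
    _ = s.e := hesplit
  have habs' : ∀ t : A, t * (s.e * v) = t → x * t = (s.y * v) * t := by
    intro t ht
    have hte : t * s.e = t := by
      calc t * s.e = (t * (s.e * v)) * s.e := by rw [ht]
      _ = t * ((s.e * v) * s.e) := by ring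
      _ = t * (s.e * v) := by rw [he'e]
      _ = t := ht
    have hwt : w * t = 0 := by
      calc w * t = w * (t * (s.e * v)) := by rw [ht]
      _ = (w * (s.e * v)) * t := by ring
      _ = 0 := by rw [hwe', zero_mul]
    calc x * t = s.y * t := s.habs t hte
    _ = (w + s.y * v) * t := by rw [← hysplit]
    _ = w * t + (s.y * v) * t := by ring
    _ = (s.y * v) * t := by rw [hwt, zero_add]
  have hy'0 : s.y * v ≠ 0 := by
    intro h
    apply hx (s.e * v) he'0
    rw [habs' (s.e * v) hee', h, zero_mul]
  have hy'ne : s.y * v ≠ s.e * v := by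
    intro h
    apply s.hyne
    rw [hysplit, h, hesplit]
  have hlt : s.y * v < s.y := by
    refine lt_of_le_of_ne (mul_le_left _ _) ?_
    intro h
    apply hw0
    have h1 : w * (s.y * v) = 0 := by
      calc w * (s.y * v) = (w * v) * s.y := by ring
      _ = 0 := by rw [hwv0, zero_mul]
    calc w = w * s.y := hwy'.symm
    _ = w * (s.y * v) := by rw [h]
    _ = 0 := h1
  exact ⟨⟨s.e * v, s.y * v, hee', hy'e', hy'0, hy'ne, habs'⟩,
    he'e, hlt, w, hw0, hww, hwe, hwe'⟩

lemma mem_zdSet (hyp : CondC1 A ∨ (CondC2 A ∧ ElemDCC A))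
    (hyp2 : NoInfiniteOrthogonalIdempotents A ∨ ElemDCC A)
    {x : A} (hx0 : x ≠ 0) (hx1 : x ≠ 1) : x ∈ zdSet A := by
  classical
  by_contra hmem
  have hx : ∀ t : A, t ≠ 0 → x * t ≠ 0 := by
    intro t ht hxt
    exact hmem ⟨hx0, t, ht, hxt⟩
  -- initial state
  have h10 : (1 : A) ≠ 0 := by
    intro h
    exact hx0 (by rw [← mul_one x, h, mul_zero])
  let s0 : St A x := ⟨1, x, by rw [mul_one], by rw [mul_one], hx0, hx1,
    fun t _ => rfl⟩
  let F : St A x → St A x := fun s => (step_exists hx hyp s).choose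
  have hF : ∀ s, StepRel s (F s) := fun s => (step_exists hx hyp s).choose_spec
  let g : ℕ → St A x := fun n => F^[n] s0
  have hg : ∀ n, StepRel (g n) (g (n+1)) := by
    intro n
    have : g (n+1) = F (g n) := Function.iterate_succ_apply' F n s0
    rw [this]
    exact hF (g n)
  -- chain property of the e's
  have hchain : ∀ n k : ℕ, (g (n+k)).e * (g n).e = (g (n+k)).e := by
    intro n k
    induction k with
    | zero => exact (g n).hee
    | succ j ih =>
        have h1 := (hg (n+j)).1
        calc (g (n+j+1)).e * (g n).e
            = ((g (n+j+1)).e * (g (n+j)).e) * (g n).e := by rw [h1]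
          _ = (g (n+j+1)).e * ((g (n+j)).e * (g n).e) := by ring
          _ = (g (n+j+1)).e * (g (n+j)).e := by rw [ih]
          _ = (g (n+j+1)).e := h1
  rcases hyp2 with hnoinf | hdcc
  · -- extract orthogonal idempotents
    let W : ℕ → A := fun n => (hg n).2.2.choose
    have hW : ∀ n, W n ≠ 0 ∧ W n * W n = W n ∧ W n * (g n).e = W n ∧ W n * (g (n+1)).e = 0 :=
      fun n => (hg n).2.2.choose_spec
    have horth : ∀ n m : ℕ, n < m → W n * W m = 0 := by
      intro n m hnm
      obtain ⟨k, rfl⟩ : ∃ k, m = (n+1) + k := ⟨m - (n+1), by omega⟩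
      have h1 : W ((n+1)+k) * (g (n+1)).e = W ((n+1)+k) := by
        have h2 := (hW ((n+1)+k)).2.2.1
        calc W ((n+1)+k) * (g (n+1)).e
            = (W ((n+1)+k) * (g ((n+1)+k)).e) * (g (n+1)).e := by rw [h2]
          _ = W ((n+1)+k) * ((g ((n+1)+k)).e * (g (n+1)).e) := by ring
          _ = W ((n+1)+k) * (g ((n+1)+k)).e := by rw [hchain (n+1) k]
          _ = W ((n+1)+k) := h2
      calc W n * W ((n+1)+k) = W n * (W ((n+1)+k) * (g (n+1)).e) := by rw [h1]
        _ = (W n * (g (n+1)).e) * W ((n+1)+k) := by ring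
        _ = 0 := by rw [(hW n).2.2.2, zero_mul]
    have hWinj : Function.Injective W := by
      intro i j hij
      by_contra hne
      rcases Nat.lt_or_ge i j with h | h
      · have := horth i j h
        rw [hij] at this
        exact (hW j).1 (by rw [← (hW j).2.1, this])
      · have hji : j < i := lt_of_le_of_ne h (Ne.symm hne)
        have := horth j i hji
        rw [hij] at this
        exact (hW j).1 (by rw [← (hW j).2.1, this])
    have hfin : (Set.range W).Finite := by
      apply hnoinf
      · rintro e ⟨n, rfl⟩
        exact ⟨(hW n).1, (hW n).2.1⟩
      · rintro e ⟨n, rfl⟩ f ⟨m, rfl⟩ hne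
        rcases Nat.lt_or_ge n m with h | h
        · exact horth n m h
        · have hmn : m < n := lt_of_le_of_ne h (fun h' => hne (by rw [h']))
          rw [mul_comm]
          exact horth m n hmn
    exact (Set.infinite_range_of_injective hWinj) hfin
  · exact hdcc ⟨fun n => (g n).y, fun n => (hg n).2.1⟩

lemma zdSet_eq (hyp : CondC1 A ∨ (CondC2 A ∧ ElemDCC A))
    (hyp2 : NoInfiniteOrthogonalIdempotents A ∨ ElemDCC A) :
    zdSet A = Set.univ \ {0, 1} := by
  ext a
  simp only [Set.mem_diff, Set.mem_univ, Set.mem_insert_iff, Set.mem_singleton_iff, true_and]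
  constructor
  · rintro ⟨ha0, b, hb0, hab⟩
    push_neg
    refine ⟨ha0, ?_⟩
    rintro rfl
    rw [one_mul] at hab
    exact hb0 hab
  · intro h
    push_neg at h
    exact mem_zdSet hyp hyp2 h.1 h.2

end PoS

theorem finite_iff_zdSet_finite {A : Type*} [PoSemiring A] [Nontrivial A]
    (hZ : (zdSet A).Nonempty)
    (hyp : (CondC1 A ∧ NoInfiniteOrthogonalIdempotents A) ∨ (CondC2 A ∧ ElemDCC A)) :
    ((Set.univ : Set A).Finite ↔ (zdSet A).Finite) ∧
    ((Set.univ : Set A).Finite → (zdSet A).ncard = Nat.card A - 2) := by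
  have hyp' : CondC1 A ∨ (CondC2 A ∧ ElemDCC A) := by
    rcases hyp with ⟨h1, _⟩ | h2
    · exact Or.inl h1
    · exact Or.inr h2
  have hyp2 : NoInfiniteOrthogonalIdempotents A ∨ ElemDCC A := by
    rcases hyp with ⟨_, h1⟩ | ⟨_, h2⟩
    · exact Or.inl h1
    · exact Or.inr h2
  have heq : zdSet A = Set.univ \ {0, 1} := PoS.zdSet_eq hyp' hyp2
  constructor
  · constructor
    · intro h
      exact h.subset (Set.subset_univ _)
    · intro h
      have : (Set.univ : Set A) = zdSet A ∪ {0, 1} := by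
        rw [heq]
        rw [Set.diff_union_self]
        simp
      rw [this]
      exact h.union (Set.toFinite _)
  · intro hfin
    have hA : Finite A := Set.finite_univ_iff.mp hfin
    rw [heq]
    rw [Set.ncard_diff (Set.subset_univ _)]
    have h01 : ({0, 1} : Set A).ncard = 2 := by
      rw [Set.ncard_pair (zero_ne_one)]
    rw [h01, Set.ncard_univ]
end

section
/- Let A be a po-semiring with Z(A) ≠ ∅. Then for every minimal element e of A and every x ∈ A, either e·x = 0 or e·x = e; consequently every minimal element of A is a zero divisor, i.e., belongs to Z(A). -/
/-- A minimal element of a po-semiring: a nonzero element with nothing strictly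
between it and `0`. -/
def IsMinimalElem {A : Type*} [PoSemiring A] (e : A) : Prop :=
  e ≠ 0 ∧ ∀ y : A, 0 < y → y ≤ e → e = y

theorem minimal_elem_is_zero_divisor {A : Type*} [PoSemiring A] [Nontrivial A]
    (hZ : (zdSet A).Nonempty) :
    (∀ e : A, IsMinimalElem e → ∀ x : A, e * x = 0 ∨ e * x = e) ∧
    (∀ e : A, IsMinimalElem e → e ∈ zdSet A) := by
  have key : ∀ e : A, IsMinimalElem e → ∀ x : A, e * x = 0 ∨ e * x = e := by
    intro e he x
    by_cases h : e * x = 0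
    · exact Or.inl h
    · right
      have hle : e * x ≤ e := by
        have := PoSemiring.mul_left_mono e x 1 (PoSemiring.zero_le_elem e)
          (PoSemiring.le_one_elem x)
        simpa using this
      have hpos : 0 < e * x := lt_of_le_of_ne (PoSemiring.zero_le_elem _) (Ne.symm h)
      exact (he.2 _ hpos hle).symm
  refine ⟨key, fun e he => ?_⟩
  obtain ⟨a, ha0, b, hb0, hab⟩ := hZ
  rcases key e he a with h | h
  · exact ⟨he.1, a, ha0, h⟩
  · rcases key e he b with h2 | h2
    · exact ⟨he.1, b, hb0, h2⟩
    · exfalso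
      apply he.1
      have : e * b = 0 := by
        calc e * b = (e * a) * b := by rw [h]
        _ = e * (a * b) := by ring
        _ = 0 := by rw [hab, mul_zero]
      rw [h2] at this; exact this
end

section
/- Let A be a po-semiring with Z(A) = {c} (exactly one nonzero zero divisor). Then c² = 0, c is the least nonzero element of A (c ≤ x for every nonzero x ∈ A, and c < x for x ∉ {0, c}), and c is a prime element of A. -/
theorem structure_of_single_zero_divisor {A : Type*} [PoSemiring A] [Nontrivial A]
    (c : A) (hZ : zdSet A = {c}) :
    c * c = 0 ∧ (∀ x : A, x ≠ 0 → c ≤ x) ∧ (∀ x : A, x ≠ 0 → x ≠ c → c < x) ∧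
    IsPrimeElem c := by
  have hcmem : c ∈ zdSet A := by rw [hZ]; rfl
  obtain ⟨hc0, b, hb0, hcb⟩ := hcmem
  have hmem : ∀ a : A, a ∈ zdSet A → a = c := fun a ha => by rw [hZ] at ha; exact ha
  have hcc : c * c = 0 := by
    have hbc : b * c = 0 := by rw [mul_comm]; exact hcb
    have hb : b = c := hmem b ⟨hb0, c, hc0, hbc⟩
    rw [hb] at hcb; exact hcb
  have hle0 : ∀ x : A, x ≤ 0 → x = 0 := fun x h =>
    le_antisymm h (PoSemiring.zero_le_elem x)
  have hxc_eq : ∀ x : A, x ≠ 0 → x ≠ c → x * c = c := by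
    intro x hx hxc
    by_cases h : x * c = 0
    · exact absurd (hmem x ⟨hx, c, hc0, h⟩) hxc
    · exact hmem _ ⟨h, c, hc0, by rw [mul_assoc, hcc, mul_zero]⟩
  have hle : ∀ x : A, x ≠ 0 → c ≤ x := by
    intro x hx
    by_cases hxc : x = c
    · rw [hxc]
    · calc c = x * c := (hxc_eq x hx hxc).symm
        _ ≤ x * 1 := PoSemiring.mul_left_mono x c 1 (PoSemiring.zero_le_elem x)
            (PoSemiring.le_one_elem c)
        _ = x := mul_one x
  refine ⟨hcc, hle, fun x hx hxc => lt_of_le_of_ne (hle x hx) (Ne.symm hxc), ?_, ?_⟩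
  · intro h
    rw [h, mul_one] at hcc
    exact one_ne_zero hcc
  · intro x y hxy
    by_cases hx0 : x = 0
    · exact Or.inl (hx0 ▸ PoSemiring.zero_le_elem c)
    by_cases hy0 : y = 0
    · exact Or.inr (hy0 ▸ PoSemiring.zero_le_elem c)
    by_cases hxc : x = c
    · exact Or.inl (le_of_eq hxc)
    by_cases hyc : y = c
    · exact Or.inr (le_of_eq hyc)
    exfalso
    have hsq : x * y * (x * y) = 0 := by
      apply hle0
      calc x * y * (x * y) ≤ x * y * c :=
            PoSemiring.mul_left_mono _ _ _ (PoSemiring.zero_le_elem _) hxy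
        _ = c * (x * y) := mul_comm _ _
        _ ≤ c * c := PoSemiring.mul_left_mono _ _ _ (PoSemiring.zero_le_elem _) hxy
        _ = 0 := hcc
    have hsq' : (x * x) * (y * y) = 0 := by rw [← hsq]; ring
    have hxx0 : x * x ≠ 0 := fun h => hxc (hmem x ⟨hx0, x, hx0, h⟩)
    have hyy0 : y * y ≠ 0 := fun h => hyc (hmem y ⟨hy0, y, hy0, h⟩)
    have hx2 : x * x = c := hmem _ ⟨hxx0, y * y, hyy0, hsq'⟩
    have hxc' : x * c = c := hxc_eq x hx0 hxc
    have h4 : x * (x * (x * x)) = 0 := by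
      have : x * (x * (x * x)) = (x * x) * (x * x) := by ring
      rw [this, hx2, hcc]
    rw [hx2, hxc', hxc'] at h4
    exact hc0 h4
end

section
/- Let R be a commutative ring. Then R has exactly two nontrivial ideals (ideals different from 0 and R) if and only if either R is isomorphic as a ring to F₁ × F₂ for some fields F₁ and F₂, or R is a local ring whose maximal ideal is Rα for some element α with α³ = 0 and α² ≠ 0. -/
universe u

open Ideal

section Helpers

variable {R : Type u} [CommRing R]

lemma aux_eq_zero [IsLocalRing R] {x r : R} (hr : r ∈ IsLocalRing.maximalIdeal R)
    (h : x = r * x) : x = 0 := by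
  have hu : IsUnit (1 - r) :=
    IsLocalRing.isUnit_one_sub_self_of_mem_nonunits r ((IsLocalRing.mem_maximalIdeal r).mp hr)
  have h0 : (1 - r) * x = 0 := by rw [sub_mul, one_mul, ← h, sub_self]
  obtain ⟨u, hu'⟩ := hu
  have hx : x = ↑u⁻¹ * ((1 - r) * x) := by rw [← mul_assoc, ← hu', Units.inv_mul, one_mul]
  rw [hx, h0, mul_zero]

/-- The local-ring half of the forward direction. -/
lemma aux_mem_prod {A : Type*} {B : Type*} [Semiring A] [Semiring B] {I : Ideal A}
    {J : Ideal B} {x : A × B} : x ∈ Ideal.prod I J ↔ x.1 ∈ I ∧ x.2 ∈ J :=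
  Iff.rfl

/-- The local-ring half of the forward direction. -/
lemma aux_forward_local {I J : Ideal R} (hIJ : I ≠ J)
    (hset : {K : Ideal R | K ≠ ⊥ ∧ K ≠ ⊤} = {I, J}) (hJm : ¬ J.IsMaximal) :
    ∃ _ : IsLocalRing R, ∃ α : R,
      IsLocalRing.maximalIdeal R = Ideal.span {α} ∧ α ^ 3 = 0 ∧ α ^ 2 ≠ 0 := by
  have hEq := Set.ext_iff.mp hset
  have hI : I ≠ ⊥ ∧ I ≠ ⊤ := (hEq I).mpr (Or.inl rfl)
  have hJ : J ≠ ⊥ ∧ J ≠ ⊤ := (hEq J).mpr (Or.inr rfl)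
  have hmem : ∀ K : Ideal R, K ≠ ⊥ → K ≠ ⊤ → K = I ∨ K = J :=
    fun K h1 h2 => (hEq K).mp ⟨h1, h2⟩
  obtain ⟨x0, hx0I, hx00⟩ := Submodule.exists_mem_ne_zero_of_ne_bot hI.1
  haveI : Nontrivial R := nontrivial_of_ne x0 0 hx00
  have hmax : ∀ m : Ideal R, m.IsMaximal → m = I := by
    intro m hm
    have hmb : m ≠ ⊥ := by
      intro h
      subst h
      exact hI.1 ((hm.eq_of_le hI.2 bot_le).symm)
    rcases hmem m hmb hm.ne_top with h | h
    · exact h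
    · exact absurd (h ▸ hm) hJm
  obtain ⟨m, hm⟩ := Ideal.exists_maximal R
  have hImax : I.IsMaximal := hmax m hm ▸ hm
  have hloc : IsLocalRing R := IsLocalRing.of_unique_max_ideal ⟨I, hImax, fun K hK => hmax K hK⟩
  have hIm : I = IsLocalRing.maximalIdeal R := IsLocalRing.eq_maximalIdeal hImax
  have hJI : J ≤ I := hIm ▸ IsLocalRing.le_maximalIdeal hJ.2
  have hnle : ¬ I ≤ J := fun h => hIJ (le_antisymm h hJI)
  obtain ⟨α, hαI, hαJ⟩ := SetLike.not_le_iff_exists.mp hnle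
  have hα0 : α ≠ 0 := fun h => hαJ (h ▸ J.zero_mem)
  have hspan : Ideal.span {α} = I := by
    have h1 : Ideal.span {α} ≠ ⊥ := fun h => hα0 (Ideal.span_singleton_eq_bot.mp h)
    have hle : Ideal.span {α} ≤ I := (Ideal.span_singleton_le_iff_mem _).mpr hαI
    have h2 : Ideal.span {α} ≠ ⊤ := fun h => hI.2 (top_le_iff.mp (h ▸ hle))
    rcases hmem _ h1 h2 with h | h
    · exact h
    · exact absurd (h ▸ Ideal.mem_span_singleton_self α) hαJ
  -- span {α * α}
  have hm2le : Ideal.span {α * α} ≤ I :=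
    (Ideal.span_singleton_le_iff_mem _).mpr (I.mul_mem_left α hαI)
  have hm2_ne_top : Ideal.span {α * α} ≠ ⊤ := fun h => hI.2 (top_le_iff.mp (h ▸ hm2le))
  have hm2_ne_I : Ideal.span {α * α} ≠ I := by
    intro h
    have hmem' : α ∈ Ideal.span {α * α} := h ▸ (hspan ▸ Ideal.mem_span_singleton_self α)
    obtain ⟨r, hr⟩ := Ideal.mem_span_singleton'.mp hmem'
    have : α = (r * α) * α := by rw [mul_assoc]; exact hr.symm
    have hz : α = 0 := aux_eq_zero (hIm ▸ I.mul_mem_left r hαI) this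
    exact hα0 hz
  have hm2_ne_bot : Ideal.span {α * α} ≠ ⊥ := by
    intro h
    have hαα : α * α = 0 := Ideal.span_singleton_eq_bot.mp h
    obtain ⟨x, hxJ, hx0⟩ := Submodule.exists_mem_ne_zero_of_ne_bot hJ.1
    have hxI : x ∈ Ideal.span {α} := hspan.symm ▸ hJI hxJ
    obtain ⟨r, hr⟩ := Ideal.mem_span_singleton'.mp hxI
    have hsx_le : Ideal.span {x} ≤ J := (Ideal.span_singleton_le_iff_mem _).mpr hxJ
    have hsx_bot : Ideal.span {x} ≠ ⊥ := fun h => hx0 (Ideal.span_singleton_eq_bot.mp h)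
    have hsx_top : Ideal.span {x} ≠ ⊤ := fun h' => hJ.2 (top_le_iff.mp (h' ▸ hsx_le))
    rcases hmem _ hsx_bot hsx_top with h' | h'
    · exact hIJ (le_antisymm (h' ▸ hsx_le) hJI)
    · -- span {x} = J ; show r is a unit → J = I, contradiction
      by_cases hrI : r ∈ I
      · obtain ⟨s, hs⟩ := Ideal.mem_span_singleton'.mp (hspan ▸ hrI)
        have : x = 0 := by
          rw [← hr, ← hs, mul_assoc, hαα, mul_zero]
        exact hx0 this
      · have hru : IsUnit r := by
          rw [hIm] at hrI
          exact IsLocalRing.notMem_maximalIdeal.mp hrI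
        have : Ideal.span {x} = Ideal.span {α} := by
          rw [← hr]; exact Ideal.span_singleton_mul_left_unit hru α
        exact hIJ (by rw [← hspan, ← this, h'])
  have hm2 : Ideal.span {α * α} = J := (hmem _ hm2_ne_bot hm2_ne_top).resolve_left hm2_ne_I
  have hα2 : α * α ≠ 0 := fun h => hJ.1 (hm2 ▸ Ideal.span_singleton_eq_bot.mpr h)
  -- span {α * α * α} = ⊥
  have hm3le : Ideal.span {α * α * α} ≤ J := by
    rw [← hm2]
    exact (Ideal.span_singleton_le_iff_mem _).mpr
      (by rw [show α * α * α = α * (α * α) by ring]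
          exact Ideal.mul_mem_left _ α (Ideal.mem_span_singleton_self _))
  have hα3 : α * α * α = 0 := by
    by_contra h3
    have h3b : Ideal.span {α * α * α} ≠ ⊥ := fun h => h3 (Ideal.span_singleton_eq_bot.mp h)
    have h3t : Ideal.span {α * α * α} ≠ ⊤ := fun h' => hJ.2 (top_le_iff.mp (h' ▸ hm3le))
    rcases hmem _ h3b h3t with h' | h'
    · exact hIJ (le_antisymm (h' ▸ hm3le) hJI)
    · have hmem' : α * α ∈ Ideal.span {α * α * α} := by
        rw [h', ← hm2]; exact Ideal.mem_span_singleton_self _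
      obtain ⟨r, hr⟩ := Ideal.mem_span_singleton'.mp hmem'
      have heq : α * α = (r * α) * (α * α) := by
        rw [show (r * α) * (α * α) = r * (α * α * α) by ring, hr]
      exact hα2 (aux_eq_zero (hIm ▸ I.mul_mem_left r hαI) heq)
  refine ⟨hloc, α, by rw [← hIm, ← hspan], ?_, ?_⟩
  · rw [show α ^ 3 = α * α * α by ring, hα3]
  · rw [show α ^ 2 = α * α by ring]; exact hα2

end Helpers

theorem two_nontrivial_ideals_iff {R : Type u} [CommRing R] :
    (∃ I J : Ideal R, I ≠ J ∧ {K : Ideal R | K ≠ ⊥ ∧ K ≠ ⊤} = {I, J}) ↔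
      ((∃ (F₁ F₂ : Type u) (_ : Field F₁) (_ : Field F₂),
          Nonempty (R ≃+* F₁ × F₂)) ∨
        (∃ _ : IsLocalRing R, ∃ α : R,
          IsLocalRing.maximalIdeal R = Ideal.span {α} ∧ α ^ 3 = 0 ∧ α ^ 2 ≠ 0)) := by
  constructor
  · rintro ⟨I, J, hIJ, hset⟩
    by_cases hImax : I.IsMaximal
    · by_cases hJmax : J.IsMaximal
      · -- two maximal ideals: product of fields
        have hEq := Set.ext_iff.mp hset
        have hI : I ≠ ⊥ ∧ I ≠ ⊤ := (hEq I).mpr (Or.inl rfl)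
        have hJ : J ≠ ⊥ ∧ J ≠ ⊤ := (hEq J).mpr (Or.inr rfl)
        have hmem : ∀ K : Ideal R, K ≠ ⊥ → K ≠ ⊤ → K = I ∨ K = J :=
          fun K h1 h2 => (hEq K).mp ⟨h1, h2⟩
        have hcop : IsCoprime I J :=
          Ideal.isCoprime_iff_sup_eq.mpr (hImax.coprime_of_ne hJmax hIJ)
        have hinf : I ⊓ J = ⊥ := by
          by_contra h
          have hne_top : I ⊓ J ≠ ⊤ := fun h' => hI.2 (top_le_iff.mp (h' ▸ inf_le_left))
          rcases hmem _ h hne_top with h' | h'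
          · have : I ≤ J := inf_eq_left.mp h'
            exact hIJ (hImax.eq_of_le hJmax.ne_top this)
          · have : J ≤ I := inf_eq_right.mp h'
            exact hIJ ((hJmax.eq_of_le hImax.ne_top this).symm)
        haveI := hImax
        haveI := hJmax
        refine Or.inl ⟨R ⧸ I, R ⧸ J, Ideal.Quotient.field I, Ideal.Quotient.field J,
          ⟨((RingEquiv.quotientBot R).symm.trans (Ideal.quotEquivOfEq hinf.symm)).trans
            (Ideal.quotientInfEquivQuotientProd I J hcop)⟩⟩
      · exact Or.inr (aux_forward_local hIJ hset hJmax)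
    · refine Or.inr (aux_forward_local hIJ.symm ?_ hImax)
      rw [hset, Set.pair_comm]
  · rintro (⟨F₁, F₂, f₁, f₂, ⟨e⟩⟩ | ⟨hloc, α, hm, hα3, hα2⟩)
    · -- product of fields
      set P₁ : Ideal (F₁ × F₂) := Ideal.prod ⊥ ⊤ with hP₁
      set P₂ : Ideal (F₁ × F₂) := Ideal.prod ⊤ ⊥ with hP₂
      have hbij : Function.Bijective (e : R →+* F₁ × F₂) := e.bijective
      set c : Ideal (F₁ × F₂) → Ideal R := fun L => Ideal.comap (e : R →+* F₁ × F₂) L with hc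
      have hy1 : e.symm (0, 1) ∈ c P₁ := by
        show e (e.symm (0, 1)) ∈ P₁
        rw [e.apply_symm_apply]
        exact aux_mem_prod.mpr ⟨Ideal.zero_mem _, Submodule.mem_top⟩
      have hy1ne : e.symm (0, 1) ≠ 0 := by
        intro h
        have := congrArg e h
        rw [e.apply_symm_apply, map_zero] at this
        exact one_ne_zero (congrArg Prod.snd this)
      have hy2 : e.symm (1, 0) ∈ c P₂ := by
        show e (e.symm (1, 0)) ∈ P₂
        rw [e.apply_symm_apply]
        exact aux_mem_prod.mpr ⟨Submodule.mem_top, Ideal.zero_mem _⟩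
      have hy2ne : e.symm (1, 0) ≠ 0 := by
        intro h
        have := congrArg e h
        rw [e.apply_symm_apply, map_zero] at this
        exact one_ne_zero (congrArg Prod.fst this)
      have hcP₁_ne_top : c P₁ ≠ ⊤ := by
        intro h
        have h1 : (1 : R) ∈ c P₁ := h ▸ Submodule.mem_top
        have : (e 1).1 ∈ (⊥ : Ideal F₁) := (aux_mem_prod.mp h1).1
        rw [map_one] at this
        exact one_ne_zero (Ideal.mem_bot.mp this)
      have hcP₂_ne_top : c P₂ ≠ ⊤ := by
        intro h
        have h1 : (1 : R) ∈ c P₂ := h ▸ Submodule.mem_top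
        have : (e 1).2 ∈ (⊥ : Ideal F₂) := (aux_mem_prod.mp h1).2
        rw [map_one] at this
        exact one_ne_zero (Ideal.mem_bot.mp this)
      have hcP₁_ne_bot : c P₁ ≠ ⊥ := fun h => hy1ne (Ideal.mem_bot.mp (h ▸ hy1))
      have hcP₂_ne_bot : c P₂ ≠ ⊥ := fun h => hy2ne (Ideal.mem_bot.mp (h ▸ hy2))
      have hne : c P₁ ≠ c P₂ := by
        intro h
        have hy1' : e.symm (0, 1) ∈ c P₂ := by rw [← h]; exact hy1
        have : e (e.symm (0, 1)) ∈ P₂ := hy1'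
        rw [e.apply_symm_apply] at this
        exact one_ne_zero (Ideal.mem_bot.mp (aux_mem_prod.mp this).2)
      refine ⟨c P₁, c P₂, hne, ?_⟩
      ext K
      simp only [Set.mem_setOf_eq, Set.mem_insert_iff, Set.mem_singleton_iff]
      constructor
      · rintro ⟨hKb, hKt⟩
        have hKcm : K = c (Ideal.map (e : R →+* F₁ × F₂) K) :=
          (Ideal.comap_map_of_bijective _ hbij).symm
        have hL := Ideal.ideal_prod_eq (Ideal.map (e : R →+* F₁ × F₂) K)
        rcases Ideal.eq_bot_or_top (Ideal.map (RingHom.fst F₁ F₂)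
            (Ideal.map (e : R →+* F₁ × F₂) K)) with h1 | h1 <;>
        rcases Ideal.eq_bot_or_top (Ideal.map (RingHom.snd F₁ F₂)
            (Ideal.map (e : R →+* F₁ × F₂) K)) with h2 | h2 <;>
          rw [h1, h2] at hL
        · exfalso
          apply hKb
          rw [hKcm, hL]
          refine le_antisymm ?_ bot_le
          intro x hx
          have hx' : e x ∈ Ideal.prod (⊥ : Ideal F₁) (⊥ : Ideal F₂) := hx
          obtain ⟨h1', h2'⟩ := aux_mem_prod.mp hx'
          have hex : e x = 0 := by
            apply Prod.ext
            · exact Ideal.mem_bot.mp h1'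
            · exact Ideal.mem_bot.mp h2'
          have : x = 0 := by
            have := congrArg e.symm hex
            rwa [e.symm_apply_apply, map_zero] at this
          exact Ideal.mem_bot.mpr this
        · left; rw [hKcm, hL]
        · right; rw [hKcm, hL]
        · exfalso
          apply hKt
          rw [hKcm, hL, Ideal.prod_top_top]
          exact Ideal.comap_top
      · rintro (rfl | rfl)
        · exact ⟨hcP₁_ne_bot, hcP₁_ne_top⟩
        · exact ⟨hcP₂_ne_bot, hcP₂_ne_top⟩
    · -- local ring case
      haveI := hloc
      have hαα2 : α * α ≠ 0 := by rwa [show α * α = α ^ 2 by ring]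
      have hα0 : α ≠ 0 := fun h => hαα2 (by rw [h, mul_zero])
      have hmax_ne_top : Ideal.span {α} ≠ ⊤ :=
        hm ▸ (IsLocalRing.maximalIdeal.isMaximal R).ne_top
      have hsq_mem : α * α ∈ Ideal.span {α} :=
        Ideal.mul_mem_left _ α (Ideal.mem_span_singleton_self α)
      have hsq_le : Ideal.span {α * α} ≤ Ideal.span {α} :=
        (Ideal.span_singleton_le_iff_mem _).mpr hsq_mem
      have hne : Ideal.span {α * α} ≠ Ideal.span {α} := by
        intro h
        have : α ∈ Ideal.span {α * α} := h.symm ▸ Ideal.mem_span_singleton_self α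
        obtain ⟨r, hr⟩ := Ideal.mem_span_singleton'.mp this
        have heq : α = (r * α) * α := by rw [mul_assoc]; exact hr.symm
        have hrα : r * α ∈ IsLocalRing.maximalIdeal R :=
          hm ▸ Ideal.mul_mem_left _ r (Ideal.mem_span_singleton_self α)
        exact hα0 (aux_eq_zero hrα heq)
      refine ⟨Ideal.span {α * α}, Ideal.span {α}, hne, ?_⟩
      ext K
      simp only [Set.mem_setOf_eq, Set.mem_insert_iff, Set.mem_singleton_iff]
      constructor
      · rintro ⟨hKb, hKt⟩
        have hKle : K ≤ Ideal.span {α} := hm ▸ IsLocalRing.le_maximalIdeal hKt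
        by_cases hc : K ≤ Ideal.span {α * α}
        · left
          obtain ⟨x, hxK, hx0⟩ := Submodule.exists_mem_ne_zero_of_ne_bot hKb
          obtain ⟨r, hr⟩ := Ideal.mem_span_singleton'.mp (hc hxK)
          have hru : IsUnit r := by
            by_contra hru
            have hrm : r ∈ Ideal.span {α} :=
              hm ▸ (IsLocalRing.mem_maximalIdeal r).mpr hru
            obtain ⟨s, hs⟩ := Ideal.mem_span_singleton'.mp hrm
            apply hx0
            rw [← hr, ← hs, show s * α * (α * α) = s * (α ^ 3) by ring, hα3, mul_zero]
          refine le_antisymm hc ?_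
          have : Ideal.span {x} = Ideal.span {α * α} := by
            rw [← hr]; exact Ideal.span_singleton_mul_left_unit hru _
          rw [← this]
          exact (Ideal.span_singleton_le_iff_mem _).mpr hxK
        · right
          obtain ⟨x, hxK, hx2⟩ := SetLike.not_le_iff_exists.mp hc
          obtain ⟨r, hr⟩ := Ideal.mem_span_singleton'.mp (hKle hxK)
          have hru : IsUnit r := by
            by_contra hru
            have hrm : r ∈ Ideal.span {α} :=
              hm ▸ (IsLocalRing.mem_maximalIdeal r).mpr hru
            obtain ⟨s, hs⟩ := Ideal.mem_span_singleton'.mp hrm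
            apply hx2
            rw [← hr, ← hs]
            exact Ideal.mem_span_singleton'.mpr ⟨s, by ring⟩
          refine le_antisymm hKle ?_
          have : Ideal.span {x} = Ideal.span {α} := by
            rw [← hr]; exact Ideal.span_singleton_mul_left_unit hru _
          rw [← this]
          exact (Ideal.span_singleton_le_iff_mem _).mpr hxK
      · rintro (rfl | rfl)
        · exact ⟨fun h => hαα2 (Ideal.span_singleton_eq_bot.mp h),
            fun h => hmax_ne_top (top_le_iff.mp (h ▸ hsq_le))⟩
        · exact ⟨fun h => hα0 (Ideal.span_singleton_eq_bot.mp h), hmax_ne_top⟩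
end
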